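/- arXiv:1301.0102 — 3 statements merged into one kernel-verified Lean document; each statement's English description precedes it below -/
import Mathlib

section
/- If G is a d_G-regular connected simple Ricci-flat graph and H is a d_H-regular connected simple Ricci-flat graph, then the Cartesian product graph G □ H is Ricci-flat. -/
open Filter Topology Classical

noncomputable section

namespace RicciFlatPaper

variable {V : Type*}

/-- Degree as the natural cardinality of the neighbor set. -/
def deg (G : SimpleGraph V) (x : V) : ℕ := (G.neighborSet x).ncard

/-- The probability measure `m_x^α`: mass `α` at `x`, mass `(1-α)/d_x` at each
neighbor of `x`, and `0` elsewhere. -/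
def mass (G : SimpleGraph V) (α : ℝ) (x : V) : V → ℝ :=
  fun v => if v = x then α else if G.Adj x v then (1 - α) / (deg G x) else 0

/-- `A` is a (finitely supported, nonnegative) coupling between `m₁` and `m₂`. -/
def IsCoupling (m₁ m₂ : V → ℝ) (A : V → V → ℝ) : Prop :=
  (∀ u v, 0 ≤ A u v) ∧
  (Function.support (fun p : V × V => A p.1 p.2)).Finite ∧
  (∀ u, ∑ᶠ v, A u v = m₁ u) ∧ (∀ v, ∑ᶠ u, A u v = m₂ v)

/-- The transportation (Wasserstein) distance between two distributions,
with respect to the graph distance of `G`. -/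
def W (G : SimpleGraph V) (m₁ m₂ : V → ℝ) : ℝ :=
  sInf {c | ∃ A : V → V → ℝ, IsCoupling m₁ m₂ A ∧
    c = ∑ᶠ p : V × V, A p.1 p.2 * (G.dist p.1 p.2 : ℝ)}

/-- `κ_α(x,y) = 1 - W(m_x^α, m_y^α)`. -/
def kappaAlpha (G : SimpleGraph V) (α : ℝ) (x y : V) : ℝ :=
  1 - W G (mass G α x) (mass G α y)

/-- Lin–Lu–Yau Ricci curvature `κ(x,y) = lim_{α→1} κ_α(x,y)/(1-α)`. -/
def ricci (G : SimpleGraph V) (x y : V) : ℝ :=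
  limUnder (𝓝[<] (1 : ℝ)) (fun α => kappaAlpha G α x y / (1 - α))

/-- A graph is Ricci-flat if the Ricci curvature vanishes on every edge. -/
def RicciFlat (G : SimpleGraph V) : Prop := ∀ x y : V, G.Adj x y → ricci G x y = 0

/-- The edge `xy` lies on a cycle of length `n`. -/
def EdgeInCycleOfLength (G : SimpleGraph V) (x y : V) (n : ℕ) : Prop :=
  ∃ (v : V) (c : G.Walk v v), c.IsCycle ∧ c.length = n ∧ s(x, y) ∈ c.edges

/-! ### Auxiliary machinery -/

section Finsum

variable {ι σ : Type*}

/-- Fiberwise grouping for finsums. -/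
lemma finsum_sum_filter (Q : Finset ι) (κ : ι → σ) (c : ι → ℝ) :
    ∑ᶠ y : σ, ∑ i ∈ Q.filter (fun i => κ i = y), c i = ∑ i ∈ Q, c i := by
  classical
  rw [finsum_eq_sum_of_support_subset _ (s := Q.image κ) ?_]
  · exact Finset.sum_fiberwise_of_maps_to (fun i hi => Finset.mem_image_of_mem κ hi) c
  · intro y hy
    simp only [Function.mem_support, ne_eq] at hy
    by_contra h
    apply hy
    rw [Finset.filter_eq_empty_iff.mpr, Finset.sum_empty]
    intro i hi hκ
    exact h (by
      simp only [Finset.coe_image, Set.mem_image, Finset.mem_coe]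
      exact ⟨i, hi, hκ⟩)

/-- Sums over filters do not depend on the decidability instance. -/
lemma sum_filter_irrel {ι : Type*} (Q : Finset ι) (p : ι → Prop) (h1 h2 : DecidablePred p)
    (f : ι → ℝ) :
    (@Finset.filter _ p h1 Q).sum f = (@Finset.filter _ p h2 Q).sum f := by
  have : h1 = h2 := funext fun a => Subsingleton.elim _ _
  rw [this]

end Finsum

section CouplingBasics

variable {G : SimpleGraph V} {m₁ m₂ : V → ℝ} {A : V → V → ℝ}

/-- The transportation cost of a plan. -/
def cost (G : SimpleGraph V) (A : V → V → ℝ) : ℝ :=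
  ∑ᶠ p : V × V, A p.1 p.2 * (G.dist p.1 p.2 : ℝ)

lemma cost_nonneg (h : ∀ u v, 0 ≤ A u v) : 0 ≤ cost G A :=
  finsum_nonneg fun p => mul_nonneg (h _ _) (Nat.cast_nonneg _)

lemma W_bddBelow (G : SimpleGraph V) (m₁ m₂ : V → ℝ) :
    BddBelow {c | ∃ A : V → V → ℝ, IsCoupling m₁ m₂ A ∧
      c = ∑ᶠ p : V × V, A p.1 p.2 * (G.dist p.1 p.2 : ℝ)} := by
  refine ⟨0, ?_⟩
  rintro c ⟨B, hB, rfl⟩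
  exact cost_nonneg hB.1

lemma W_le (h : IsCoupling m₁ m₂ A) : W G m₁ m₂ ≤ cost G A :=
  csInf_le (W_bddBelow G m₁ m₂) ⟨A, h, rfl⟩

lemma exists_coupling_cost_lt (hne : ∃ B, IsCoupling m₁ m₂ B) {ε : ℝ} (hε : 0 < ε) :
    ∃ B, IsCoupling m₁ m₂ B ∧ cost G B < W G m₁ m₂ + ε := by
  obtain ⟨B₀, hB₀⟩ := hne
  obtain ⟨c, hc, hlt⟩ := Real.lt_sInf_add_pos (s := {c | ∃ A : V → V → ℝ, IsCoupling m₁ m₂ A ∧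
    c = ∑ᶠ p : V × V, A p.1 p.2 * (G.dist p.1 p.2 : ℝ)}) ⟨_, B₀, hB₀, rfl⟩ hε
  obtain ⟨B, hB, rfl⟩ := hc
  exact ⟨B, hB, hlt⟩

/-- The finite support of a coupling, as a `Finset`. -/
def suppC (h : IsCoupling m₁ m₂ A) : Finset (V × V) := h.2.1.toFinset

lemma mem_suppC {h : IsCoupling m₁ m₂ A} {z : V × V} : z ∈ suppC h ↔ A z.1 z.2 ≠ 0 := by
  simp [suppC, Function.mem_support]

lemma row_support_finite (h : IsCoupling m₁ m₂ A) (u : V) :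
    (Function.support fun v => A u v).Finite := by
  have : (Function.support fun v => A u v) ⊆ (fun v => (u, v)) ⁻¹'
      (Function.support fun p : V × V => A p.1 p.2) := fun v hv => hv
  exact (h.2.1.preimage (Function.Injective.injOn (fun a b hab => (Prod.mk.injEq _ _ _ _ ▸ hab).2))).subset this

lemma col_support_finite (h : IsCoupling m₁ m₂ A) (v : V) :
    (Function.support fun u => A u v).Finite := by
  have : (Function.support fun u => A u v) ⊆ (fun u => (u, v)) ⁻¹'
      (Function.support fun p : V × V => A p.1 p.2) := fun u hu => hu
  exact (h.2.1.preimage (Function.Injective.injOn (fun a b hab => (Prod.mk.injEq _ _ _ _ ▸ hab).1))).subset this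

lemma row_eq (h : IsCoupling m₁ m₂ A) (u : V) :
    m₁ u = ∑ z ∈ (suppC h).filter (fun z => z.1 = u), A z.1 z.2 := by
  classical
  rw [← h.2.2.1 u]
  rw [finsum_eq_sum_of_support_subset _
    (s := ((suppC h).filter (fun z => z.1 = u)).image Prod.snd) ?_]
  · rw [Finset.sum_image ?inj]
    case inj =>
      rintro ⟨a₁, b₁⟩ h₁ ⟨a₂, b₂⟩ h₂ hb
      simp only [Finset.mem_coe, Finset.mem_filter] at h₁ h₂
      have ha : a₁ = a₂ := h₁.2.trans h₂.2.symm
      have hbb : b₁ = b₂ := hb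
      rw [ha, hbb]
    exact Finset.sum_congr rfl fun z hz => by
      simp only [Finset.mem_filter] at hz; rw [hz.2]
  · intro v hv
    simp only [Function.mem_support, ne_eq] at hv
    have hz : ((u, v) : V × V) ∈ (suppC h).filter (fun z => z.1 = u) := by
      rw [Finset.mem_filter]
      exact ⟨mem_suppC.mpr hv, rfl⟩
    exact Finset.mem_image_of_mem Prod.snd hz

lemma col_eq (h : IsCoupling m₁ m₂ A) (v : V) :
    m₂ v = ∑ z ∈ (suppC h).filter (fun z => z.2 = v), A z.1 z.2 := by
  classical
  rw [← h.2.2.2 v]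
  rw [finsum_eq_sum_of_support_subset _
    (s := ((suppC h).filter (fun z => z.2 = v)).image Prod.fst) ?_]
  · rw [Finset.sum_image ?inj]
    case inj =>
      rintro ⟨a₁, b₁⟩ h₁ ⟨a₂, b₂⟩ h₂ hb
      simp only [Finset.mem_coe, Finset.mem_filter] at h₁ h₂
      have hbb : b₁ = b₂ := h₁.2.trans h₂.2.symm
      have ha : a₁ = a₂ := hb
      rw [ha, hbb]
    exact Finset.sum_congr rfl fun z hz => by
      simp only [Finset.mem_filter] at hz; rw [hz.2]
  · intro u hu
    simp only [Function.mem_support, ne_eq] at hu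
    have hz : ((u, v) : V × V) ∈ (suppC h).filter (fun z => z.2 = v) := by
      rw [Finset.mem_filter]
      exact ⟨mem_suppC.mpr hu, rfl⟩
    exact Finset.mem_image_of_mem Prod.fst hz

lemma cost_eq (G : SimpleGraph V) (h : IsCoupling m₁ m₂ A) :
    cost G A = ∑ z ∈ suppC h, A z.1 z.2 * (G.dist z.1 z.2 : ℝ) := by
  refine finsum_eq_sum_of_support_subset _ fun p hp => ?_
  simp only [Function.mem_support, ne_eq] at hp
  rw [Finset.mem_coe, mem_suppC]
  intro h0
  exact hp (by rw [h0, zero_mul])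

/-- Kantorovich easy direction: a Lipschitz function bounds the cost from below. -/
lemma sub_le_cost (G : SimpleGraph V) (h : IsCoupling m₁ m₂ A) (f : V → ℝ)
    (hf : ∀ u v, f u - f v ≤ (G.dist u v : ℝ)) :
    (∑ᶠ u, f u * m₁ u) - (∑ᶠ v, f v * m₂ v) ≤ cost G A := by
  classical
  have h1 : (∑ᶠ u, f u * m₁ u) = ∑ z ∈ suppC h, f z.1 * A z.1 z.2 := by
    rw [finsum_eq_sum_of_support_subset _ (s := (suppC h).image Prod.fst) ?_]
    · rw [← Finset.sum_fiberwise_of_maps_to (g := Prod.fst)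
        (fun z hz => Finset.mem_image_of_mem Prod.fst hz) (fun z => f z.1 * A z.1 z.2)]
      refine Finset.sum_congr rfl fun u _ => ?_
      rw [row_eq h u, Finset.mul_sum]
      exact Finset.sum_congr rfl fun z hz => by
        simp only [Finset.mem_filter] at hz; rw [hz.2]
    · intro u hu
      simp only [Function.mem_support, ne_eq] at hu
      have hm : m₁ u ≠ 0 := fun h0 => hu (by rw [h0, mul_zero])
      rw [row_eq h u] at hm
      obtain ⟨z, hz, hz0⟩ := Finset.exists_ne_zero_of_sum_ne_zero hm
      simp only [Finset.mem_filter] at hz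
      exact Finset.mem_coe.mpr (hz.2 ▸ Finset.mem_image_of_mem Prod.fst hz.1)
  have h2 : (∑ᶠ v, f v * m₂ v) = ∑ z ∈ suppC h, f z.2 * A z.1 z.2 := by
    rw [finsum_eq_sum_of_support_subset _ (s := (suppC h).image Prod.snd) ?_]
    · rw [← Finset.sum_fiberwise_of_maps_to (g := Prod.snd)
        (fun z hz => Finset.mem_image_of_mem Prod.snd hz) (fun z => f z.2 * A z.1 z.2)]
      refine Finset.sum_congr rfl fun v _ => ?_
      rw [col_eq h v, Finset.mul_sum]
      exact Finset.sum_congr rfl fun z hz => by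
        simp only [Finset.mem_filter] at hz; rw [hz.2]
    · intro v hv
      simp only [Function.mem_support, ne_eq] at hv
      have hm : m₂ v ≠ 0 := fun h0 => hv (by rw [h0, mul_zero])
      rw [col_eq h v] at hm
      obtain ⟨z, hz, hz0⟩ := Finset.exists_ne_zero_of_sum_ne_zero hm
      simp only [Finset.mem_filter] at hz
      exact Finset.mem_coe.mpr (hz.2 ▸ Finset.mem_image_of_mem Prod.snd hz.1)
  rw [h1, h2, cost_eq G h, ← Finset.sum_sub_distrib]
  refine Finset.sum_le_sum fun z hz => ?_
  rw [← sub_mul, mul_comm (A z.1 z.2)]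
  exact mul_le_mul_of_nonneg_right (hf z.1 z.2) (h.1 _ _)

lemma le_W (hne : ∃ B, IsCoupling m₁ m₂ B) (f : V → ℝ)
    (hf : ∀ u v, f u - f v ≤ (G.dist u v : ℝ)) :
    (∑ᶠ u, f u * m₁ u) - (∑ᶠ v, f v * m₂ v) ≤ W G m₁ m₂ := by
  obtain ⟨B₀, hB₀⟩ := hne
  refine le_csInf ⟨_, B₀, hB₀, rfl⟩ ?_
  rintro c ⟨B, hB, rfl⟩
  exact sub_le_cost G hB f hf

end CouplingBasics

section Indexed

variable {ι : Type*} {G : SimpleGraph V}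

/-- A transport plan built from an indexed family of point masses. -/
def indexedA (P : Finset ι) (src tgt : ι → V) (c : ι → ℝ) : V → V → ℝ :=
  fun u v => ∑ i ∈ P.filter (fun i => src i = u ∧ tgt i = v), c i

lemma isCoupling_indexed (P : Finset ι) (src tgt : ι → V) (c : ι → ℝ)
    (hc : ∀ i ∈ P, 0 ≤ c i) {m₁ m₂ : V → ℝ}
    (h₁ : ∀ u, m₁ u = ∑ i ∈ P.filter (fun i => src i = u), c i)
    (h₂ : ∀ v, m₂ v = ∑ i ∈ P.filter (fun i => tgt i = v), c i) :
    IsCoupling m₁ m₂ (indexedA P src tgt c) := by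
  classical
  refine ⟨?_, ?_, ?_, ?_⟩
  · intro u v
    exact Finset.sum_nonneg fun i hi => hc i (Finset.mem_filter.mp hi).1
  · refine Set.Finite.subset (Finset.finite_toSet (P.image fun i => (src i, tgt i))) ?_
    intro p hp
    simp only [Function.mem_support, ne_eq, indexedA] at hp
    obtain ⟨i, hi, hi0⟩ := Finset.exists_ne_zero_of_sum_ne_zero hp
    simp only [Finset.mem_filter] at hi
    simp only [Finset.coe_image, Set.mem_image, Finset.mem_coe]
    exact ⟨i, hi.1, by rw [hi.2.1, hi.2.2]⟩
  · intro u
    rw [h₁ u, ← finsum_sum_filter (P.filter (fun i => src i = u)) tgt c]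
    refine finsum_congr fun v => ?_
    rw [Finset.filter_filter]
    rfl
  · intro v
    rw [h₂ v, ← finsum_sum_filter (P.filter (fun i => tgt i = v)) src c]
    refine finsum_congr fun u => ?_
    rw [Finset.filter_filter, indexedA]
    congr 1
    ext i
    simp [and_comm]

lemma cost_indexed (G : SimpleGraph V) (P : Finset ι) (src tgt : ι → V) (c : ι → ℝ) :
    cost G (indexedA P src tgt c) = ∑ i ∈ P, c i * (G.dist (src i) (tgt i) : ℝ) := by
  classical
  rw [cost, finsum_eq_sum_of_support_subset _ (s := P.image fun i => (src i, tgt i)) ?_]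
  · rw [← Finset.sum_fiberwise_of_maps_to (g := fun i => (src i, tgt i))
      (fun i hi => Finset.mem_image_of_mem _ hi) (fun i => c i * (G.dist (src i) (tgt i) : ℝ))]
    refine Finset.sum_congr rfl fun p _ => ?_
    rw [indexedA, Finset.sum_mul]
    refine Finset.sum_congr ?_ fun i hi => ?_
    · ext i; simp [Prod.ext_iff]
    · simp only [Finset.mem_filter] at hi
      rw [← hi.2]
  · intro p hp
    simp only [Function.mem_support, ne_eq] at hp
    have : indexedA P src tgt c p.1 p.2 ≠ 0 := fun h0 => hp (by rw [h0, zero_mul])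
    simp only [indexedA] at this
    obtain ⟨i, hi, hi0⟩ := Finset.exists_ne_zero_of_sum_ne_zero this
    simp only [Finset.mem_filter] at hi
    simp only [Finset.coe_image, Set.mem_image, Finset.mem_coe]
    exact ⟨i, hi.1, by rw [hi.2.1, hi.2.2]⟩

end Indexed

section MassBasics

variable (G : SimpleGraph V) [G.LocallyFinite]

lemma card_nb (x : V) : (G.neighborFinset x).card = deg G x := by
  rw [SimpleGraph.neighborFinset_def, deg, Set.ncard_eq_toFinset_card']

lemma deg_pos {x y : V} (h : G.Adj x y) : 0 < deg G x := by
  rw [← card_nb]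
  exact Finset.card_pos.mpr ⟨y, (SimpleGraph.mem_neighborFinset G x y).mpr h⟩

lemma mass_support {α : ℝ} {x : V} :
    Function.support (mass G α x) ⊆ ↑(insert x (G.neighborFinset x)) := by
  intro v hv
  simp only [Function.mem_support, ne_eq, mass] at hv
  by_cases h1 : v = x
  · simp [h1]
  · rw [if_neg h1] at hv
    by_cases h2 : G.Adj x v
    · simp [SimpleGraph.mem_neighborFinset, h2]
    · exact absurd (if_neg h2) hv

lemma finsum_mul_mass (f : V → ℝ) (α : ℝ) (x : V) :
    ∑ᶠ u, f u * mass G α x u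
      = f x * α + ∑ u ∈ G.neighborFinset x, f u * ((1 - α) / (deg G x : ℝ)) := by
  classical
  rw [finsum_eq_sum_of_support_subset _ (s := insert x (G.neighborFinset x)) ?_]
  · rw [Finset.sum_insert (by simp)]
    congr 1
    · simp [mass]
    · refine Finset.sum_congr rfl fun u hu => ?_
      rw [SimpleGraph.mem_neighborFinset] at hu
      rw [mass, if_neg hu.ne', if_pos hu]
  · intro u hu
    have : u ∈ Function.support (mass G α x) := by
      simp only [Function.mem_support, ne_eq] at hu ⊢
      intro h0; exact hu (by rw [h0, mul_zero])
    exact mass_support G this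

lemma finsum_mass {α : ℝ} {x : V} (hx : deg G x ≠ 0) : ∑ᶠ u, mass G α x u = 1 := by
  have := finsum_mul_mass G (fun _ => (1 : ℝ)) α x
  simp only [one_mul] at this
  rw [this, Finset.sum_const, card_nb, nsmul_eq_mul]
  field_simp
  ring

end MassBasics

section GraphSide

variable (G : SimpleGraph V) [G.LocallyFinite]

/-- There is a coupling of the two mass distributions with cost at most `α + 3(1-α)`. -/
lemma exists_coupling_mass (hGc : G.Connected) {x y : V} (hxy : G.Adj x y)
    {α : ℝ} (h0 : 0 ≤ α) (h1 : α ≤ 1) :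
    ∃ A, IsCoupling (mass G α x) (mass G α y) A ∧ cost G A ≤ α + 3 * (1 - α) := by
  classical
  have hdx : 0 < deg G x := deg_pos G hxy
  have hdy : 0 < deg G y := deg_pos G hxy.symm
  have hdxR : (0:ℝ) < deg G x := by exact_mod_cast hdx
  have hdyR : (0:ℝ) < deg G y := by exact_mod_cast hdy
  set D : ℝ := (1 - α) / ((deg G x : ℝ) * (deg G y)) with hD
  have hD0 : 0 ≤ D := by
    rw [hD]; apply div_nonneg (by linarith) (by positivity)
  set c : V × V → ℝ := fun i => if i = (x, y) then α else D with hcdef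
  set P : Finset (V × V) := insert (x, y) (G.neighborFinset x ×ˢ G.neighborFinset y) with hPdef
  have hxynot : (x, y) ∉ G.neighborFinset x ×ˢ G.neighborFinset y := by
    simp [Finset.mem_product, SimpleGraph.mem_neighborFinset]
  have hcprod : ∀ i ∈ G.neighborFinset x ×ˢ G.neighborFinset y, c i = D := by
    intro i hi
    rw [Finset.mem_product] at hi
    have : i ≠ (x, y) := by
      rintro rfl
      exact G.irrefl ((SimpleGraph.mem_neighborFinset G x x).mp hi.1)
    simp [hcdef, this]
  have hrow : ∀ u, mass G α x u = ∑ i ∈ P.filter (fun i => i.1 = u), c i := by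
    intro u
    rw [Finset.sum_filter, hPdef, Finset.sum_insert hxynot]
    have hprod : ∑ i ∈ G.neighborFinset x ×ˢ G.neighborFinset y, (if i.1 = u then c i else 0)
        = if u ∈ G.neighborFinset x then (deg G y : ℝ) * D else 0 := by
      rw [Finset.sum_congr rfl (fun i hi => by rw [hcprod i hi])]
      rw [Finset.sum_product]
      have hin : ∀ a ∈ G.neighborFinset x,
          (∑ b ∈ G.neighborFinset y, if (a, b).1 = u then D else 0)
            = (if a = u then (deg G y : ℝ) * D else 0) := by
        intro a _
        by_cases hau : a = u
        · rw [if_pos hau]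
          rw [Finset.sum_congr rfl (fun b _ => if_pos hau), Finset.sum_const, card_nb,
            nsmul_eq_mul]
        · rw [if_neg hau]
          exact Finset.sum_eq_zero fun b _ => if_neg hau
      rw [Finset.sum_congr rfl hin, Finset.sum_ite_eq' (G.neighborFinset x) u]
    rw [hprod]
    have hcxy : c (x, y) = α := by simp [hcdef]
    by_cases hux : u = x
    · rw [if_pos (show ((x, y) : V × V).1 = u from hux.symm), hcxy,
        if_neg (show u ∉ G.neighborFinset x from fun hmem =>
          G.irrefl (hux ▸ (SimpleGraph.mem_neighborFinset G x u).mp hmem)), add_zero]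
      simp only [mass]
      rw [if_pos hux]
    · rw [if_neg (show ¬((x, y) : V × V).1 = u from fun h => hux h.symm)]
      by_cases hadj : G.Adj x u
      · rw [if_pos ((SimpleGraph.mem_neighborFinset G x u).mpr hadj)]
        rw [mass, if_neg hux, if_pos hadj, hD, zero_add]
        field_simp
      · rw [if_neg (by simpa [SimpleGraph.mem_neighborFinset] using hadj)]
        rw [mass, if_neg hux, if_neg hadj, zero_add]
  have hcol : ∀ v, mass G α y v = ∑ i ∈ P.filter (fun i => i.2 = v), c i := by
    intro v
    rw [Finset.sum_filter, hPdef, Finset.sum_insert hxynot]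
    have hprod : ∑ i ∈ G.neighborFinset x ×ˢ G.neighborFinset y, (if i.2 = v then c i else 0)
        = if v ∈ G.neighborFinset y then (deg G x : ℝ) * D else 0 := by
      rw [Finset.sum_congr rfl (fun i hi => by rw [hcprod i hi])]
      rw [Finset.sum_product_right]
      have hin : ∀ b ∈ G.neighborFinset y,
          (∑ a ∈ G.neighborFinset x, if ((a, b) : V × V).2 = v then D else 0)
            = (if b = v then (deg G x : ℝ) * D else 0) := by
        intro b _
        by_cases hbv : b = v
        · rw [if_pos hbv]
          rw [Finset.sum_congr rfl (fun a _ => if_pos hbv), Finset.sum_const, card_nb,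
            nsmul_eq_mul]
        · rw [if_neg hbv]
          exact Finset.sum_eq_zero fun a _ => if_neg hbv
      rw [Finset.sum_congr rfl hin, Finset.sum_ite_eq' (G.neighborFinset y) v]
    rw [hprod]
    have hcxy : c (x, y) = α := by simp [hcdef]
    by_cases hvy : v = y
    · rw [if_pos (show ((x, y) : V × V).2 = v from hvy.symm), hcxy,
        if_neg (show v ∉ G.neighborFinset y from fun hmem =>
          G.irrefl (hvy ▸ (SimpleGraph.mem_neighborFinset G y v).mp hmem)), add_zero]
      simp only [mass]
      rw [if_pos hvy]
    · rw [if_neg (show ¬((x, y) : V × V).2 = v from fun h => hvy h.symm)]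
      by_cases hadj : G.Adj y v
      · rw [if_pos ((SimpleGraph.mem_neighborFinset G y v).mpr hadj)]
        rw [mass, if_neg hvy, if_pos hadj, hD, zero_add]
        field_simp
      · rw [if_neg (by simpa [SimpleGraph.mem_neighborFinset] using hadj)]
        rw [mass, if_neg hvy, if_neg hadj, zero_add]
  have hcpos : ∀ i ∈ P, 0 ≤ c i := by
    intro i _
    rw [hcdef]
    dsimp only
    split_ifs
    · exact h0
    · exact hD0
  refine ⟨indexedA P Prod.fst Prod.snd c, isCoupling_indexed P _ _ c hcpos hrow hcol, ?_⟩
  rw [cost_indexed, hPdef, Finset.sum_insert hxynot]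
  have hdxy : G.dist x y = 1 := SimpleGraph.dist_eq_one_iff_adj.mpr hxy
  have hfirst : c (x, y) * (G.dist (x, y).1 (x, y).2 : ℝ) = α := by
    simp [hcdef, hdxy]
  have hrest : ∑ i ∈ G.neighborFinset x ×ˢ G.neighborFinset y,
      c i * (G.dist i.1 i.2 : ℝ) ≤ 3 * (1 - α) := by
    have hterm : ∀ i ∈ G.neighborFinset x ×ˢ G.neighborFinset y,
        c i * (G.dist i.1 i.2 : ℝ) ≤ D * 3 := by
      intro i hi
      have hic := hcprod i hi
      rw [Finset.mem_product] at hi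
      have hia : G.Adj x i.1 := (SimpleGraph.mem_neighborFinset G x i.1).mp hi.1
      have hib : G.Adj y i.2 := (SimpleGraph.mem_neighborFinset G y i.2).mp hi.2
      have hd3 : G.dist i.1 i.2 ≤ 3 := by
        have t1 : G.dist i.1 i.2 ≤ G.dist i.1 x + G.dist x i.2 := hGc.dist_triangle
        have t2 : G.dist x i.2 ≤ G.dist x y + G.dist y i.2 := hGc.dist_triangle
        have e1 : G.dist i.1 x = 1 := SimpleGraph.dist_eq_one_iff_adj.mpr hia.symm
        have e3 : G.dist y i.2 = 1 := SimpleGraph.dist_eq_one_iff_adj.mpr hib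
        omega
      have hd3R : (G.dist i.1 i.2 : ℝ) ≤ 3 := by exact_mod_cast hd3
      rw [hic]
      exact mul_le_mul_of_nonneg_left hd3R hD0
    calc ∑ i ∈ G.neighborFinset x ×ˢ G.neighborFinset y, c i * (G.dist i.1 i.2 : ℝ)
        ≤ ∑ _i ∈ G.neighborFinset x ×ˢ G.neighborFinset y, D * 3 :=
          Finset.sum_le_sum hterm
      _ = ((deg G x : ℝ) * (deg G y)) * (D * 3) := by
          rw [Finset.sum_const, Finset.card_product, card_nb, card_nb, nsmul_eq_mul]
          push_cast
          ring
      _ = 3 * (1 - α) := by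
          rw [hD]
          field_simp
  rw [hfirst]
  linarith [hrest]

lemma W_mass_nonempty (hGc : G.Connected) {x y : V} (hxy : G.Adj x y)
    {α : ℝ} (h0 : 0 ≤ α) (h1 : α ≤ 1) :
    ∃ A, IsCoupling (mass G α x) (mass G α y) A := by
  obtain ⟨A, hA, -⟩ := exists_coupling_mass G hGc hxy h0 h1
  exact ⟨A, hA⟩

lemma mass_affine (t a b : ℝ) (x v : V) :
    mass G (t * a + (1 - t) * b) x v = t * mass G a x v + (1 - t) * mass G b x v := by
  unfold mass
  split_ifs with h1 h2
  · ring
  · rw [mul_div_assoc', mul_div_assoc', ← add_div]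
    congr 1
    ring
  · ring

/-- Key convexity estimate for the transport distance in `α`. -/
lemma W_slope (hGc : G.Connected) {x y : V} (hxy : G.Adj x y)
    {α₁ α₂ : ℝ} (h₁ : α₁ ∈ Set.Ioo (0:ℝ) 1) (h₂ : α₂ ∈ Set.Ioo (0:ℝ) 1)
    (h12 : α₁ ≤ α₂) :
    W G (mass G α₂ x) (mass G α₂ y)
      ≤ ((1 - α₂) / (1 - α₁)) * W G (mass G α₁ x) (mass G α₁ y)
        + (1 - (1 - α₂) / (1 - α₁)) := by
  classical
  set t := (1 - α₂) / (1 - α₁) with ht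
  have h1α₁ : (0:ℝ) < 1 - α₁ := by linarith [h₁.2]
  have h1α₂ : (0:ℝ) < 1 - α₂ := by linarith [h₂.2]
  have ht0 : 0 < t := div_pos h1α₂ h1α₁
  have ht1 : t ≤ 1 := by rw [ht, div_le_one h1α₁]; linarith
  have htα : t * (1 - α₁) = 1 - α₂ := div_mul_cancel₀ _ h1α₁.ne'
  refine le_of_forall_pos_le_add fun ε hε => ?_
  obtain ⟨A₁, hA₁, hcost⟩ := exists_coupling_cost_lt (G := G)
      (W_mass_nonempty G hGc hxy h₁.1.le h₁.2.le) (div_pos hε ht0)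
  set A : V → V → ℝ := fun u v => t * A₁ u v + (if u = x ∧ v = y then 1 - t else 0) with hAdef
  have hα2eq : t * α₁ + (1 - t) * 1 = α₂ := by
    have : t * α₁ = t - (1 - α₂) := by nlinarith [htα]
    linarith
  have hrowsupp : ∀ u, (Function.support fun v => t * A₁ u v).Finite := by
    intro u
    apply Set.Finite.subset (row_support_finite hA₁ u)
    intro v hv
    simp only [Function.mem_support, ne_eq] at hv ⊢
    intro h; exact hv (by rw [h, mul_zero])
  have hcolsupp : ∀ v, (Function.support fun u => t * A₁ u v).Finite := by
    intro v
    apply Set.Finite.subset (col_support_finite hA₁ v)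
    intro u hu
    simp only [Function.mem_support, ne_eq] at hu ⊢
    intro h; exact hu (by rw [h, mul_zero])
  have hA : IsCoupling (mass G α₂ x) (mass G α₂ y) A := by
    refine ⟨?_, ?_, ?_, ?_⟩
    · intro u v
      apply add_nonneg (mul_nonneg ht0.le (hA₁.1 u v))
      split_ifs
      · linarith
      · exact le_rfl
    · refine Set.Finite.subset (hA₁.2.1.union (Set.finite_singleton (x, y))) ?_
      intro p hp
      simp only [Function.mem_support, ne_eq, hAdef] at hp
      by_cases hp1 : A₁ p.1 p.2 = 0
      · right
        rw [hp1, mul_zero, zero_add] at hp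
        have : p.1 = x ∧ p.2 = y := by
          by_contra hc
          exact hp (if_neg hc)
        simp [Set.mem_singleton_iff, Prod.ext_iff, this.1, this.2]
      · left; exact hp1
    · intro u
      have hfin2 : (Function.support fun v => if u = x ∧ v = y then 1 - t else 0).Finite := by
        apply Set.Finite.subset (Set.finite_singleton y)
        intro v hv
        simp only [Function.mem_support, ne_eq] at hv
        simp only [Set.mem_singleton_iff]
        by_contra hvy
        exact hv (if_neg (fun h => hvy h.2))
      rw [show (fun v => A u v) = fun v => t * A₁ u v + (if u = x ∧ v = y then 1 - t else 0)
          from rfl]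
      rw [finsum_add_distrib (hrowsupp u) hfin2]
      rw [← mul_finsum' _ _ (row_support_finite hA₁ u), hA₁.2.2.1 u]
      have hsingle : ∑ᶠ v, (if u = x ∧ v = y then 1 - t else 0)
          = if u = x then 1 - t else 0 := by
        rw [finsum_eq_single _ y (fun v hv => if_neg (fun hh => hv hh.2))]
        by_cases hux : u = x <;> simp [hux]
      rw [hsingle, ← hα2eq, mass_affine]
      congr 1
      by_cases hux : u = x
      · simp [mass, hux]
      · rw [mass, if_neg hux, if_neg hux]
        split_ifs
        · simp
        · simp
    · intro v
      have hfin2 : (Function.support fun u => if u = x ∧ v = y then 1 - t else 0).Finite := by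
        apply Set.Finite.subset (Set.finite_singleton x)
        intro u hu
        simp only [Function.mem_support, ne_eq] at hu
        simp only [Set.mem_singleton_iff]
        by_contra hux
        exact hu (if_neg (fun h => hux h.1))
      rw [show (fun u => A u v) = fun u => t * A₁ u v + (if u = x ∧ v = y then 1 - t else 0)
          from rfl]
      rw [finsum_add_distrib (hcolsupp v) hfin2]
      rw [← mul_finsum' _ _ (col_support_finite hA₁ v), hA₁.2.2.2 v]
      have hsingle : ∑ᶠ u, (if u = x ∧ v = y then 1 - t else 0)
          = if v = y then 1 - t else 0 := by
        rw [finsum_eq_single _ x (fun u hu => if_neg (fun hh => hu hh.1))]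
        by_cases hvy : v = y <;> simp [hvy]
      rw [hsingle, ← hα2eq, mass_affine]
      congr 1
      by_cases hvy : v = y
      · simp [mass, hvy]
      · rw [mass, if_neg hvy, if_neg hvy]
        split_ifs
        · simp
        · simp
  have hcostA : cost G A = t * cost G A₁ + (1 - t) := by
    rw [cost]
    have hsplit : ∀ p : V × V, A p.1 p.2 * (G.dist p.1 p.2 : ℝ)
        = t * (A₁ p.1 p.2 * (G.dist p.1 p.2 : ℝ))
          + (if p.1 = x ∧ p.2 = y then 1 - t else 0) * (G.dist p.1 p.2 : ℝ) := by
      intro p; rw [hAdef]; ring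
    rw [finsum_congr hsplit]
    have hf1 : (Function.support fun p : V × V =>
        t * (A₁ p.1 p.2 * (G.dist p.1 p.2 : ℝ))).Finite := by
      apply Set.Finite.subset hA₁.2.1
      intro p hp
      simp only [Function.mem_support, ne_eq] at hp ⊢
      intro h; exact hp (by rw [h, zero_mul, mul_zero])
    have hf2 : (Function.support fun p : V × V =>
        (if p.1 = x ∧ p.2 = y then 1 - t else 0) * (G.dist p.1 p.2 : ℝ)).Finite := by
      apply Set.Finite.subset (Set.finite_singleton ((x, y) : V × V))
      intro p hp
      simp only [Function.mem_support, ne_eq] at hp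
      simp only [Set.mem_singleton_iff]
      by_contra hne
      apply hp
      rw [if_neg, zero_mul]
      intro hh
      exact hne (Prod.ext hh.1 hh.2)
    rw [finsum_add_distrib hf1 hf2]
    congr 1
    · rw [← mul_finsum']
      · rfl
      · apply Set.Finite.subset hA₁.2.1
        intro p hp
        simp only [Function.mem_support, ne_eq] at hp ⊢
        intro h; exact hp (by rw [h, zero_mul])
    · rw [finsum_eq_single _ ((x, y) : V × V)]
      · simp [SimpleGraph.dist_eq_one_iff_adj.mpr hxy]
      · intro p hp
        rw [if_neg, zero_mul]
        intro hh
        exact hp (Prod.ext hh.1 hh.2)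
  calc W G (mass G α₂ x) (mass G α₂ y) ≤ cost G A := W_le hA
    _ = t * cost G A₁ + (1 - t) := hcostA
    _ ≤ t * (W G (mass G α₁ x) (mass G α₁ y) + ε / t) + (1 - t) := by
        apply add_le_add_left
        exact mul_le_mul_of_nonneg_left hcost.le ht0.le
    _ = t * W G (mass G α₁ x) (mass G α₁ y) + (1 - t) + ε := by
        rw [mul_add, mul_div_cancel₀ _ ht0.ne']
        ring

lemma q_mono (hGc : G.Connected) {x y : V} (hxy : G.Adj x y) :
    MonotoneOn (fun α => kappaAlpha G α x y / (1 - α)) (Set.Ioo (0:ℝ) 1) := by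
  intro α₁ h₁ α₂ h₂ h12
  simp only
  have hs := W_slope G hGc hxy h₁ h₂ h12
  have h1α₁ : (0:ℝ) < 1 - α₁ := by linarith [h₁.2]
  have h1α₂ : (0:ℝ) < 1 - α₂ := by linarith [h₂.2]
  rw [kappaAlpha, kappaAlpha, div_le_div_iff₀ h1α₁ h1α₂]
  set W₁ := W G (mass G α₁ x) (mass G α₁ y)
  set W₂ := W G (mass G α₂ x) (mass G α₂ y)
  have key : (1 - α₁) * W₂ ≤ (1 - α₂) * W₁ + ((1 - α₁) - (1 - α₂)) := by
    have h2 := mul_le_mul_of_nonneg_left hs h1α₁.le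
    have ht : (1 - α₁) * ((1 - α₂) / (1 - α₁)) = 1 - α₂ := by field_simp
    calc (1 - α₁) * W₂
        ≤ (1 - α₁) * ((1 - α₂) / (1 - α₁) * W₁ + (1 - (1 - α₂) / (1 - α₁))) := h2
      _ = (1 - α₂) * W₁ + ((1 - α₁) - (1 - α₂)) := by
          first
          | (field_simp; ring)
          | field_simp
  nlinarith [key]

lemma q_le_two (hGc : G.Connected) {x y : V} (hxy : G.Adj x y)
    {α : ℝ} (hα : α ∈ Set.Ioo (0:ℝ) 1) :
    kappaAlpha G α x y / (1 - α) ≤ 2 := by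
  have h1α : (0:ℝ) < 1 - α := by linarith [hα.2]
  have hdy : 0 < deg G y := deg_pos G hxy.symm
  have hdyR : (0:ℝ) < deg G y := by exact_mod_cast hdy
  have hWge : 2 * α - 1 ≤ W G (mass G α x) (mass G α y) := by
    have hf : ∀ u v : V, (G.dist u y : ℝ) - (G.dist v y : ℝ) ≤ (G.dist u v : ℝ) := by
      intro u v
      have h := hGc.dist_triangle (u := u) (v := v) (w := y)
      have h' : (G.dist u y : ℝ) ≤ (G.dist u v : ℝ) + (G.dist v y : ℝ) := by exact_mod_cast h
      linarith
    have hle := le_W (G := G) (W_mass_nonempty G hGc hxy hα.1.le hα.2.le)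
      (fun u => (G.dist u y : ℝ)) hf
    rw [finsum_mul_mass, finsum_mul_mass] at hle
    have hdxy : G.dist x y = 1 := SimpleGraph.dist_eq_one_iff_adj.mpr hxy
    have hE2 : (G.dist y y : ℝ) * α
        + ∑ u ∈ G.neighborFinset y, (G.dist u y : ℝ) * ((1 - α) / (deg G y : ℝ))
        = 1 - α := by
      rw [SimpleGraph.dist_self]
      have hterm : ∀ u ∈ G.neighborFinset y,
          (G.dist u y : ℝ) * ((1 - α) / (deg G y : ℝ)) = (1 - α) / (deg G y : ℝ) := by
        intro u hu
        have : G.dist u y = 1 :=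
          SimpleGraph.dist_eq_one_iff_adj.mpr ((SimpleGraph.mem_neighborFinset G y u).mp hu).symm
        rw [this]; simp
      rw [Finset.sum_congr rfl hterm, Finset.sum_const, card_nb, nsmul_eq_mul]
      field_simp
      simp
    have hE1 : α ≤ (G.dist x y : ℝ) * α
        + ∑ u ∈ G.neighborFinset x, (G.dist u y : ℝ) * ((1 - α) / (deg G x : ℝ)) := by
      rw [hdxy]
      push_cast
      have hpos : 0 ≤ ∑ u ∈ G.neighborFinset x, (G.dist u y : ℝ) * ((1 - α) / (deg G x : ℝ)) := by
        apply Finset.sum_nonneg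
        intro u _
        apply mul_nonneg (Nat.cast_nonneg _)
        apply div_nonneg (by linarith) (Nat.cast_nonneg _)
      linarith
    linarith [hle, hE1, hE2.le, hE2.ge]
  rw [kappaAlpha, div_le_iff₀ h1α]
  linarith

/-- If the Ricci curvature of an edge is zero, the defining quotient tends to zero. -/
lemma tendsto_q (hGc : G.Connected) {x y : V} (hxy : G.Adj x y) (hflat : ricci G x y = 0) :
    Tendsto (fun α => kappaAlpha G α x y / (1 - α)) (𝓝[<] (1:ℝ)) (𝓝 0) := by
  have hmono := q_mono G hGc hxy
  have hbdd : BddAbove ((fun α => kappaAlpha G α x y / (1 - α)) '' Set.Ioo (0:ℝ) 1) := by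
    refine ⟨2, ?_⟩
    rintro - ⟨a, ha, rfl⟩
    exact q_le_two G hGc hxy ha
  have hne : (Set.Ioo (0:ℝ) 1).Nonempty := ⟨1/2, by norm_num⟩
  have htend := hmono.tendsto_nhdsWithin_Ioo_left hne hbdd
  have hlim : ricci G x y
      = sSup ((fun α => kappaAlpha G α x y / (1 - α)) '' Set.Ioo (0:ℝ) 1) :=
    htend.limUnder_eq
  rw [hflat] at hlim
  rw [← hlim] at htend
  exact htend

end GraphSide

section IsoTransfer

variable {V₁ V₂ : Type*} {G₁ : SimpleGraph V₁} {G₂ : SimpleGraph V₂}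

lemma iso_dist_le (e : G₁ ≃g G₂) (u v : V₁) : G₂.dist (e u) (e v) ≤ G₁.dist u v := by
  by_cases hr : G₁.Reachable u v
  · obtain ⟨p, hp⟩ := hr.exists_walk_length_eq_dist
    calc G₂.dist (e u) (e v) ≤ (p.map e.toHom).length := SimpleGraph.dist_le _
      _ = G₁.dist u v := by rw [SimpleGraph.Walk.length_map, hp]
  · rw [SimpleGraph.dist_eq_zero_of_not_reachable hr,
      SimpleGraph.dist_eq_zero_of_not_reachable]
    intro hr2
    apply hr
    obtain ⟨q⟩ := hr2
    exact ⟨(q.map e.symm.toHom).copy (e.symm_apply_apply u) (e.symm_apply_apply v)⟩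

lemma iso_dist (e : G₁ ≃g G₂) (u v : V₁) : G₂.dist (e u) (e v) = G₁.dist u v := by
  refine le_antisymm (iso_dist_le e u v) ?_
  have h := iso_dist_le e.symm (e u) (e v)
  rwa [e.symm_apply_apply, e.symm_apply_apply] at h

lemma iso_deg (e : G₁ ≃g G₂) (x : V₁) : deg G₂ (e x) = deg G₁ x := by
  have him : G₂.neighborSet (e x) = (fun u => e u) '' G₁.neighborSet x := by
    ext v
    simp only [SimpleGraph.mem_neighborSet, Set.mem_image]
    constructor
    · intro hadj
      refine ⟨e.symm v, ?_, by simp⟩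
      have h2 : G₂.Adj (e x) (e (e.symm v)) := by
        rwa [e.apply_symm_apply]
      exact e.map_rel_iff.mp h2
    · rintro ⟨u, hu, rfl⟩
      exact e.map_rel_iff.mpr hu
  rw [deg, deg, him, Set.ncard_image_of_injective _ (EquivLike.injective e)]

lemma iso_mass (e : G₁ ≃g G₂) (α : ℝ) (x v : V₁) :
    mass G₂ α (e x) (e v) = mass G₁ α x v := by
  rw [mass, mass, iso_deg e x]
  by_cases hvx : v = x
  · rw [if_pos (by rw [hvx]), if_pos hvx]
  · rw [if_neg (fun h => hvx (EquivLike.injective e h)), if_neg hvx]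
    by_cases hadj : G₁.Adj x v
    · rw [if_pos (e.map_rel_iff.mpr hadj), if_pos hadj]
    · rw [if_neg (fun h => hadj (e.map_rel_iff.mp h)), if_neg hadj]

lemma coupling_map_iso (e : G₁ ≃g G₂) {m₁ m₂ : V₁ → ℝ} {A : V₁ → V₁ → ℝ}
    (h : IsCoupling m₁ m₂ A) :
    IsCoupling (fun u => m₁ (e.symm u)) (fun v => m₂ (e.symm v))
        (fun u v => A (e.symm u) (e.symm v))
      ∧ cost G₂ (fun u v => A (e.symm u) (e.symm v)) = cost G₁ A := by
  constructor
  · refine ⟨fun u v => h.1 _ _, ?_, ?_, ?_⟩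
    · refine Set.Finite.subset (h.2.1.image (Prod.map (e : V₁ → V₂) (e : V₁ → V₂))) ?_
      intro p hp
      simp only [Function.mem_support, ne_eq] at hp
      refine ⟨(e.symm p.1, e.symm p.2), hp, ?_⟩
      simp [Prod.map]
    · intro u
      show (∑ᶠ v : V₂, A (e.symm u) (e.symm v)) = m₁ (e.symm u)
      rw [← h.2.2.1 (e.symm u)]
      exact finsum_comp (g := fun v => A (e.symm u) v) (fun v => e.symm v)
        (EquivLike.bijective e.symm)
    · intro v
      show (∑ᶠ u : V₂, A (e.symm u) (e.symm v)) = m₂ (e.symm v)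
      rw [← h.2.2.2 (e.symm v)]
      exact finsum_comp (g := fun u => A u (e.symm v)) (fun u => e.symm u)
        (EquivLike.bijective e.symm)
  · rw [cost, cost]
    have hbij : Function.Bijective (fun p : V₁ × V₁ => ((e p.1 : V₂), (e p.2 : V₂))) :=
      (Equiv.prodCongr e.toEquiv e.toEquiv).bijective
    rw [← finsum_comp (g := fun p : V₂ × V₂ =>
        A (e.symm p.1) (e.symm p.2) * (G₂.dist p.1 p.2 : ℝ))
      (fun p : V₁ × V₁ => ((e p.1 : V₂), (e p.2 : V₂))) hbij]
    refine finsum_congr fun p => ?_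
    simp only
    rw [e.symm_apply_apply, e.symm_apply_apply, iso_dist e]

lemma iso_W (e : G₁ ≃g G₂) (α : ℝ) (x y : V₁) :
    W G₂ (mass G₂ α (e x)) (mass G₂ α (e y)) = W G₁ (mass G₁ α x) (mass G₁ α y) := by
  unfold W
  congr 1
  ext c
  constructor
  · rintro ⟨A, hA, rfl⟩
    obtain ⟨hc, hcost⟩ := coupling_map_iso e.symm hA
    have hsymm : e.symm.symm = e := rfl
    have hm1 : (fun u => mass G₂ α (e x) (e.symm.symm u)) = mass G₁ α x := by
      funext u
      rw [hsymm]
      exact iso_mass e α x u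
    have hm2 : (fun u => mass G₂ α (e y) (e.symm.symm u)) = mass G₁ α y := by
      funext u
      rw [hsymm]
      exact iso_mass e α y u
    rw [hm1, hm2] at hc
    exact ⟨_, hc, hcost.symm⟩
  · rintro ⟨A, hA, rfl⟩
    obtain ⟨hc, hcost⟩ := coupling_map_iso e hA
    have hm1 : (fun u => mass G₁ α x (e.symm u)) = mass G₂ α (e x) := by
      funext u
      rw [← iso_mass e α x (e.symm u), e.apply_symm_apply]
    have hm2 : (fun u => mass G₁ α y (e.symm u)) = mass G₂ α (e y) := by
      funext u
      rw [← iso_mass e α y (e.symm u), e.apply_symm_apply]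
    rw [hm1, hm2] at hc
    exact ⟨_, hc, hcost.symm⟩

lemma iso_ricci (e : G₁ ≃g G₂) (x y : V₁) : ricci G₂ (e x) (e y) = ricci G₁ x y := by
  unfold ricci
  congr 1
  funext α
  rw [kappaAlpha, kappaAlpha, iso_W e α x y]

end IsoTransfer

section ProductSide

variable {W' : Type*} (G : SimpleGraph V) (H : SimpleGraph W')
variable [G.LocallyFinite] [H.LocallyFinite]

instance : (G.boxProd H).LocallyFinite := fun p => SimpleGraph.boxProdFintypeNeighborSet p

lemma deg_boxProd (a : V) (b : W') :
    deg (G.boxProd H) (a, b) = deg G a + deg H b := by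
  classical
  rw [deg, SimpleGraph.neighborSet_boxProd]
  have hfin1 : (G.neighborSet a ×ˢ ({b} : Set W')).Finite :=
    (G.neighborSet a).toFinite.prod (Set.finite_singleton b)
  have hfin2 : (({a} : Set V) ×ˢ H.neighborSet b).Finite :=
    (Set.finite_singleton a).prod (H.neighborSet b).toFinite
  have hdisj : Disjoint (G.neighborSet a ×ˢ ({b} : Set W'))
      (({a} : Set V) ×ˢ H.neighborSet b) := by
    rw [Set.disjoint_left]
    rintro ⟨u, v⟩ h1 h2
    simp only [Set.mem_prod, Set.mem_singleton_iff, SimpleGraph.mem_neighborSet] at h1 h2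
    exact G.irrefl (h2.1 ▸ h1.1)
  rw [Set.ncard_union_eq hdisj hfin1 hfin2]
  congr 1
  · have him : G.neighborSet a ×ˢ ({b} : Set W') = (fun u => (u, b)) '' G.neighborSet a := by
      ext ⟨u, v⟩
      simp only [Set.mem_prod, Set.mem_singleton_iff, Set.mem_image,
        SimpleGraph.mem_neighborSet, Prod.mk.injEq]
      constructor
      · rintro ⟨h1, rfl⟩; exact ⟨u, h1, rfl, rfl⟩
      · rintro ⟨u', h1, rfl, rfl⟩; exact ⟨h1, rfl⟩
    rw [him, Set.ncard_image_of_injective _ (fun u₁ u₂ h => by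
      simpa using (Prod.mk.injEq _ _ _ _).mp h |>.1)]
    rfl
  · have him : ({a} : Set V) ×ˢ H.neighborSet b = (fun v => (a, v)) '' H.neighborSet b := by
      ext ⟨u, v⟩
      simp only [Set.mem_prod, Set.mem_singleton_iff, Set.mem_image,
        SimpleGraph.mem_neighborSet, Prod.mk.injEq]
      constructor
      · rintro ⟨rfl, h1⟩; exact ⟨v, h1, rfl, rfl⟩
      · rintro ⟨v', h1, rfl, rfl⟩; exact ⟨rfl, h1⟩
    rw [him, Set.ncard_image_of_injective _ (fun v₁ v₂ h => by
      simpa using (Prod.mk.injEq _ _ _ _).mp h |>.2)]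
    rfl

lemma exists_proj_walk {p q : V × W'} (wk : (G.boxProd H).Walk p q) :
    ∃ r : G.Walk p.1 q.1, r.length ≤ wk.length := by
  induction wk with
  | nil => exact ⟨SimpleGraph.Walk.nil, le_rfl⟩
  | @cons u v q h wk ih =>
    obtain ⟨r, hr⟩ := ih
    rcases h with ⟨hG, -⟩ | ⟨-, h2⟩
    · exact ⟨SimpleGraph.Walk.cons hG r, Nat.succ_le_succ hr⟩
    · exact ⟨r.copy h2.symm rfl,
        (SimpleGraph.Walk.length_copy _ _ _).le.trans (Nat.le_succ_of_le hr)⟩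

lemma dist_boxProd_le (hGc : G.Connected) (a a' : V) (b : W') :
    (G.boxProd H).dist (a, b) (a', b) ≤ G.dist a a' := by
  obtain ⟨p, hp⟩ := hGc.exists_walk_length_eq_dist a a'
  calc (G.boxProd H).dist (a, b) (a', b) ≤ (p.boxProdLeft H b).length :=
        SimpleGraph.dist_le _
    _ = G.dist a a' := by rw [← hp]; exact SimpleGraph.Walk.length_map _ _

lemma le_dist_boxProd (hGc : G.Connected) (hHc : H.Connected) (p q : V × W') :
    G.dist p.1 q.1 ≤ (G.boxProd H).dist p q := by
  obtain ⟨wk, hwk⟩ := (hGc.boxProd hHc).exists_walk_length_eq_dist p q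
  obtain ⟨r, hr⟩ := exists_proj_walk G H wk
  calc G.dist p.1 q.1 ≤ r.length := SimpleGraph.dist_le _
    _ ≤ wk.length := hr
    _ = _ := hwk

end ProductSide

section ProductMain

variable {W' : Type*} (G : SimpleGraph V) (H : SimpleGraph W')
variable [G.LocallyFinite] [H.LocallyFinite]
variable (dG dH : ℕ)

lemma mass_boxProd (hGreg : ∀ v : V, deg G v = dG) (hHreg : ∀ w : W', deg H w = dH)
    (α : ℝ) (a : V) (b : W') (u : V) (v : W') :
    mass (G.boxProd H) α (a, b) (u, v) =
      (if v = b then (if u = a then α else if G.Adj a u then (1 - α) / ((dG : ℝ) + dH) else 0)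
        else 0)
      + (if u = a ∧ H.Adj b v then (1 - α) / ((dG : ℝ) + dH) else 0) := by
  have hdeg : ((deg (G.boxProd H) (a, b) : ℕ) : ℝ) = (dG : ℝ) + dH := by
    rw [deg_boxProd, hGreg, hHreg]
    push_cast
    ring
  simp only [mass, hdeg, SimpleGraph.boxProd_adj, Prod.mk.injEq]
  by_cases hv : v = b <;> by_cases hu : u = a <;>
    by_cases h1 : G.Adj a u <;> by_cases h2 : H.Adj b v <;>
    simp_all [SimpleGraph.irrefl, eq_comm]

/-- Projection of the product mass to the first factor. -/
lemma finsum_mass_boxProd_fst (hGreg : ∀ v : V, deg G v = dG) (hHreg : ∀ w : W', deg H w = dH)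
    (α : ℝ) (a : V) (u : V) (w : W') (hdpos : 0 < dG) :
    ∑ᶠ v, mass (G.boxProd H) α (a, w) (u, v)
      = mass G (α + (1 - α) * dH / ((dG : ℝ) + dH)) a u := by
  classical
  have hdGR : (0:ℝ) < dG := by exact_mod_cast hdpos
  have hden : (0:ℝ) < (dG : ℝ) + dH := by
    have : (0:ℝ) ≤ dH := Nat.cast_nonneg _
    linarith
  rw [finsum_congr (fun v => mass_boxProd G H dG dH hGreg hHreg α a w u v)]
  have hf1 : (Function.support fun v : W' =>
      (if v = w then (if u = a then α else if G.Adj a u then (1 - α) / ((dG : ℝ) + dH) else 0)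
        else 0)).Finite := by
    apply Set.Finite.subset (Set.finite_singleton w)
    intro v hv
    simp only [Function.mem_support, ne_eq] at hv
    simp only [Set.mem_singleton_iff]
    by_contra hne
    exact hv (if_neg hne)
  have hf2 : (Function.support fun v : W' =>
      (if u = a ∧ H.Adj w v then (1 - α) / ((dG : ℝ) + dH) else 0)).Finite := by
    apply Set.Finite.subset (H.neighborSet w).toFinite
    intro v hv
    simp only [Function.mem_support, ne_eq] at hv
    have : u = a ∧ H.Adj w v := by
      by_contra hc
      exact hv (if_neg hc)
    exact this.2
  rw [finsum_add_distrib hf1 hf2]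
  have e1 : ∑ᶠ v : W', (if v = w
      then (if u = a then α else if G.Adj a u then (1 - α) / ((dG : ℝ) + dH) else 0) else 0)
      = (if u = a then α else if G.Adj a u then (1 - α) / ((dG : ℝ) + dH) else 0) := by
    rw [finsum_eq_single _ w (fun v hv => if_neg hv), if_pos rfl]
  have e2 : ∑ᶠ v : W', (if u = a ∧ H.Adj w v then (1 - α) / ((dG : ℝ) + dH) else 0)
      = if u = a then (dH : ℝ) * ((1 - α) / ((dG : ℝ) + dH)) else 0 := by
    rw [finsum_eq_sum_of_support_subset _ (s := H.neighborFinset w) ?_]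
    · by_cases hu : u = a
      · rw [Finset.sum_congr rfl (fun v hv =>
            if_pos ⟨hu, (SimpleGraph.mem_neighborFinset H w v).mp hv⟩),
          Finset.sum_const, card_nb, hHreg, nsmul_eq_mul, if_pos hu]
      · simp [hu]
    · intro v hv
      simp only [Function.mem_support, ne_eq] at hv
      have : u = a ∧ H.Adj w v := by
        by_contra hc
        exact hv (if_neg hc)
      simp [SimpleGraph.mem_neighborFinset, this.2]
  rw [e1, e2]
  simp only [mass, hGreg a]
  by_cases hu : u = a
  · rw [if_pos hu, if_pos hu, if_pos hu]
    ring
  · rw [if_neg hu, if_neg hu, if_neg hu, add_zero]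
    by_cases hadj : G.Adj a u
    · rw [if_pos hadj, if_pos hadj]
      rw [div_eq_div_iff hden.ne' hdGR.ne']
      first
      | (field_simp; ring)
      | field_simp
      | ring
    · rw [if_neg hadj, if_neg hadj]

/-- Upper bound for the product transport distance. -/
lemma W_boxProd_le (hGconn : G.Connected)
    (hGreg : ∀ v : V, deg G v = dG) (hHreg : ∀ w : W', deg H w = dH)
    {x y : V} (hxy : G.Adj x y) (w : W')
    {α : ℝ} (hα : α ∈ Set.Ioo (0:ℝ) 1) :
    W (G.boxProd H) (mass (G.boxProd H) α (x, w)) (mass (G.boxProd H) α (y, w))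
      ≤ (α + (1 - α) * dG / ((dG : ℝ) + dH)) *
          W G (mass G (α / (α + (1 - α) * dG / ((dG : ℝ) + dH))) x)
              (mass G (α / (α + (1 - α) * dG / ((dG : ℝ) + dH))) y)
        + (1 - α) * dH / ((dG : ℝ) + dH) := by
  classical
  have hdG : 0 < dG := hGreg x ▸ deg_pos G hxy
  have hdGR : (0:ℝ) < dG := by exact_mod_cast hdG
  have hden : (0:ℝ) < (dG : ℝ) + dH := by
    have : (0:ℝ) ≤ dH := Nat.cast_nonneg _
    linarith
  set s : ℝ := α + (1 - α) * dG / ((dG : ℝ) + dH) with hs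
  set γ : ℝ := α / s with hγ
  have h1α : (0:ℝ) < 1 - α := by linarith [hα.2]
  have hs0 : 0 < s := by
    rw [hs]
    have : 0 < (1 - α) * dG / ((dG : ℝ) + dH) := by positivity
    linarith [hα.1]
  have hγ0 : 0 ≤ γ := div_nonneg hα.1.le hs0.le
  have hγ1 : γ < 1 := by
    rw [hγ, div_lt_one hs0, hs]
    have : 0 < (1 - α) * dG / ((dG : ℝ) + dH) := by positivity
    linarith
  have hsγ : s * γ = α := by
    rw [hγ, mul_comm, div_mul_cancel₀ _ hs0.ne']
  have hsγ' : s * (1 - γ) = (1 - α) * dG / ((dG : ℝ) + dH) := by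
    have hsub : s - α = (1 - α) * dG / ((dG : ℝ) + dH) := by rw [hs]; ring
    rw [mul_sub, mul_one, hsγ, hsub]
  refine le_of_forall_pos_le_add fun ε hε => ?_
  obtain ⟨A, hA, hcA⟩ := exists_coupling_cost_lt (G := G)
    (W_mass_nonempty G hGconn hxy hγ0 hγ1.le) (div_pos hε hs0)
  set K := G.boxProd H with hK
  set src : (V × V) ⊕ W' → V × W' := Sum.elim (fun z => (z.1, w)) (fun v => (x, v)) with hsrc
  set tgt : (V × V) ⊕ W' → V × W' := Sum.elim (fun z => (z.2, w)) (fun v => (y, v)) with htgt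
  set cc : (V × V) ⊕ W' → ℝ :=
    Sum.elim (fun z => s * A z.1 z.2) (fun _ => (1 - α) / ((dG : ℝ) + dH)) with hcc
  set P : Finset ((V × V) ⊕ W') := (suppC hA).disjSum (H.neighborFinset w) with hP
  have hmassG : ∀ (a : V) (u : V), s * mass G γ a u
      = (if u = a then α else if G.Adj a u then (1 - α) / ((dG : ℝ) + dH) else 0) := by
    intro a u
    simp only [mass, hGreg a]
    by_cases hu : u = a
    · rw [if_pos hu, if_pos hu]
      exact hsγ
    · rw [if_neg hu, if_neg hu]
      by_cases hadj : G.Adj a u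
      · rw [if_pos hadj, if_pos hadj, mul_div_assoc', hsγ']
        rw [div_div, mul_comm ((dG : ℝ) + dH) (dG : ℝ), ← div_div,
          mul_div_assoc, div_self hdGR.ne', mul_one]
      · rw [if_neg hadj, if_neg hadj, mul_zero]
  have hrow : ∀ p : V × W', mass K α (x, w) p = ∑ i ∈ P.filter (fun i => src i = p), cc i := by
    rintro ⟨u, v⟩
    rw [Finset.sum_filter, hP, Finset.sum_disjSum]
    simp only [hsrc, hcc, Sum.elim_inl, Sum.elim_inr]
    have t1 : ∑ z ∈ suppC hA, (if ((z.1 : V), w) = (u, v) then s * A z.1 z.2 else 0)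
        = if v = w then s * mass G γ x u else 0 := by
      by_cases hv : v = w
      · subst hv
        rw [if_pos rfl, row_eq hA u, Finset.mul_sum, Finset.sum_filter]
        refine Finset.sum_congr rfl fun z _ => ?_
        by_cases hz : z.1 = u
        · rw [if_pos (by rw [hz]), if_pos hz]
        · rw [if_neg (by simp [Prod.ext_iff, hz]), if_neg hz]
      · rw [if_neg hv]
        refine Finset.sum_eq_zero fun z _ => if_neg (fun h => hv ?_)
        exact ((Prod.mk.injEq _ _ _ _).mp h).2.symm
    have t2 : ∑ v' ∈ H.neighborFinset w, (if ((x : V), v') = (u, v)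
          then (1 - α) / ((dG : ℝ) + dH) else 0)
        = if u = x ∧ H.Adj w v then (1 - α) / ((dG : ℝ) + dH) else 0 := by
      by_cases hu : u = x
      · subst hu
        have hcong : ∀ v' ∈ H.neighborFinset w,
            (if ((u : V), v') = (u, v) then (1 - α) / ((dG : ℝ) + dH) else 0)
              = (if v' = v then (1 - α) / ((dG : ℝ) + dH) else 0) := by
          intro v' _
          by_cases hvv : v' = v
          · rw [if_pos (by rw [hvv]), if_pos hvv]
          · rw [if_neg (by simp [Prod.ext_iff, hvv]), if_neg hvv]
        rw [Finset.sum_congr rfl hcong, Finset.sum_ite_eq' (H.neighborFinset w) v]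
        simp [SimpleGraph.mem_neighborFinset]
      · rw [if_neg (fun h => hu h.1)]
        refine Finset.sum_eq_zero fun v' _ => if_neg (fun h => hu ?_)
        exact ((Prod.mk.injEq _ _ _ _).mp h).1.symm
    rw [t1, t2, mass_boxProd G H dG dH hGreg hHreg α x w u v]
    congr 1
    by_cases hv : v = w
    · rw [if_pos hv, if_pos hv, hmassG x u]
    · rw [if_neg hv, if_neg hv]
  have hcol : ∀ p : V × W', mass K α (y, w) p = ∑ i ∈ P.filter (fun i => tgt i = p), cc i := by
    rintro ⟨u, v⟩
    rw [Finset.sum_filter, hP, Finset.sum_disjSum]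
    simp only [htgt, hcc, Sum.elim_inl, Sum.elim_inr]
    have t1 : ∑ z ∈ suppC hA, (if ((z.2 : V), w) = (u, v) then s * A z.1 z.2 else 0)
        = if v = w then s * mass G γ y u else 0 := by
      by_cases hv : v = w
      · subst hv
        rw [if_pos rfl, col_eq hA u, Finset.mul_sum, Finset.sum_filter]
        refine Finset.sum_congr rfl fun z _ => ?_
        by_cases hz : z.2 = u
        · rw [if_pos (by rw [hz]), if_pos hz]
        · rw [if_neg (by simp [Prod.ext_iff, hz]), if_neg hz]
      · rw [if_neg hv]
        refine Finset.sum_eq_zero fun z _ => if_neg (fun h => hv ?_)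
        exact ((Prod.mk.injEq _ _ _ _).mp h).2.symm
    have t2 : ∑ v' ∈ H.neighborFinset w, (if ((y : V), v') = (u, v)
          then (1 - α) / ((dG : ℝ) + dH) else 0)
        = if u = y ∧ H.Adj w v then (1 - α) / ((dG : ℝ) + dH) else 0 := by
      by_cases hu : u = y
      · subst hu
        have hcong : ∀ v' ∈ H.neighborFinset w,
            (if ((u : V), v') = (u, v) then (1 - α) / ((dG : ℝ) + dH) else 0)
              = (if v' = v then (1 - α) / ((dG : ℝ) + dH) else 0) := by
          intro v' _
          by_cases hvv : v' = v
          · rw [if_pos (by rw [hvv]), if_pos hvv]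
          · rw [if_neg (by simp [Prod.ext_iff, hvv]), if_neg hvv]
        rw [Finset.sum_congr rfl hcong, Finset.sum_ite_eq' (H.neighborFinset w) v]
        simp [SimpleGraph.mem_neighborFinset]
      · rw [if_neg (fun h => hu h.1)]
        refine Finset.sum_eq_zero fun v' _ => if_neg (fun h => hu ?_)
        exact ((Prod.mk.injEq _ _ _ _).mp h).1.symm
    rw [t1, t2, mass_boxProd G H dG dH hGreg hHreg α y w u v]
    congr 1
    by_cases hv : v = w
    · rw [if_pos hv, if_pos hv, hmassG y u]
    · rw [if_neg hv, if_neg hv]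
  have hcpos : ∀ i ∈ P, 0 ≤ cc i := by
    rintro (z | v) _
    · exact mul_nonneg hs0.le (hA.1 _ _)
    · exact div_nonneg (by linarith [hα.2]) hden.le
  have hcoup : IsCoupling (mass K α (x, w)) (mass K α (y, w)) (indexedA P src tgt cc) := by
    refine isCoupling_indexed P src tgt cc hcpos ?_ ?_
    · intro p
      rw [hrow p]
      exact sum_filter_irrel _ _ _ _ _
    · intro p
      rw [hcol p]
      exact sum_filter_irrel _ _ _ _ _
  refine le_trans (W_le hcoup) ?_
  rw [cost_indexed, hP, Finset.sum_disjSum]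
  simp only [hsrc, htgt, hcc, Sum.elim_inl, Sum.elim_inr]
  have b1 : ∑ z ∈ suppC hA, s * A z.1 z.2 * (K.dist (z.1, w) (z.2, w) : ℝ)
      ≤ s * cost G A := by
    rw [cost_eq G hA, Finset.mul_sum]
    refine Finset.sum_le_sum fun z _ => ?_
    rw [mul_assoc]
    refine mul_le_mul_of_nonneg_left ?_ hs0.le
    refine mul_le_mul_of_nonneg_left ?_ (hA.1 _ _)
    exact_mod_cast dist_boxProd_le G H hGconn z.1 z.2 w
  have b2 : ∑ v ∈ H.neighborFinset w,
      (1 - α) / ((dG : ℝ) + dH) * (K.dist (x, v) (y, v) : ℝ)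
      = (1 - α) * dH / ((dG : ℝ) + dH) := by
    have hterm : ∀ v ∈ H.neighborFinset w,
        (1 - α) / ((dG : ℝ) + dH) * (K.dist (x, v) (y, v) : ℝ)
          = (1 - α) / ((dG : ℝ) + dH) := by
      intro v _
      have hd1 : K.dist (x, v) (y, v) = 1 :=
        SimpleGraph.dist_eq_one_iff_adj.mpr (SimpleGraph.boxProd_adj_left.mpr hxy)
      rw [hd1]
      simp
    rw [Finset.sum_congr rfl hterm, Finset.sum_const, card_nb, hHreg, nsmul_eq_mul]
    ring
  calc ∑ z ∈ suppC hA, s * A z.1 z.2 * (K.dist (z.1, w) (z.2, w) : ℝ)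
        + ∑ v ∈ H.neighborFinset w,
            (1 - α) / ((dG : ℝ) + dH) * (K.dist (x, v) (y, v) : ℝ)
      ≤ s * cost G A + (1 - α) * dH / ((dG : ℝ) + dH) := by
        rw [b2]
        exact add_le_add_left b1 _
    _ ≤ s * (W G (mass G γ x) (mass G γ y) + ε / s) + (1 - α) * dH / ((dG : ℝ) + dH) := by
        apply add_le_add_left
        exact mul_le_mul_of_nonneg_left hcA.le hs0.le
    _ = s * W G (mass G γ x) (mass G γ y) + (1 - α) * dH / ((dG : ℝ) + dH) + ε := by
        rw [mul_add, mul_div_cancel₀ _ hs0.ne']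
        ring

/-- Lower bound for the product transport distance. -/
lemma le_W_boxProd (hGconn : G.Connected) (hHconn : H.Connected)
    (hGreg : ∀ v : V, deg G v = dG) (hHreg : ∀ w : W', deg H w = dH)
    {x y : V} (hxy : G.Adj x y) (w : W')
    {α : ℝ} (hα : α ∈ Set.Ioo (0:ℝ) 1) :
    W G (mass G (α + (1 - α) * dH / ((dG : ℝ) + dH)) x)
        (mass G (α + (1 - α) * dH / ((dG : ℝ) + dH)) y)
      ≤ W (G.boxProd H) (mass (G.boxProd H) α (x, w)) (mass (G.boxProd H) α (y, w)) := by
  classical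
  set K := G.boxProd H with hK
  have hKconn : K.Connected := hGconn.boxProd hHconn
  have hKadj : K.Adj (x, w) (y, w) := SimpleGraph.boxProd_adj_left.mpr hxy
  have hdG : 0 < dG := hGreg x ▸ deg_pos G hxy
  refine le_of_forall_pos_le_add fun ε hε => ?_
  obtain ⟨B, hB, hcB⟩ := exists_coupling_cost_lt (G := K)
    (W_mass_nonempty K hKconn hKadj hα.1.le hα.2.le) hε
  set Q := suppC hB with hQ
  have hrowcol : ∀ (a : V) (κ₁ : (V × W') × (V × W') → V × W')
      (hm : ∀ p : V × W', mass K α (a, w) p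
        = ∑ z ∈ Q.filter (fun z => κ₁ z = p), B z.1 z.2) (u : V),
      mass G (α + (1 - α) * dH / ((dG : ℝ) + dH)) a u
        = ∑ z ∈ Q.filter (fun z => (κ₁ z).1 = u), B z.1 z.2 := by
    intro a κ₁ hm u
    have h1 := (finsum_sum_filter (Q.filter (fun z => (κ₁ z).1 = u))
      (fun z => (κ₁ z).2) (fun z => B z.1 z.2)).symm
    rw [h1]
    have h2 : ∀ v : W', (∑ z ∈ (Q.filter (fun z => (κ₁ z).1 = u)).filter
          (fun z => (κ₁ z).2 = v), B z.1 z.2)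
        = mass K α (a, w) (u, v) := by
      intro v
      rw [hm (u, v)]
      congr 1
      rw [Finset.filter_filter]
      ext z
      simp only [Finset.mem_filter]
      constructor
      · rintro ⟨hz, h3, h4⟩
        exact ⟨hz, Prod.ext h3 h4⟩
      · rintro ⟨hz, h3⟩
        exact ⟨hz, by rw [h3], by rw [h3]⟩
    rw [funext h2]
    exact (finsum_mass_boxProd_fst G H dG dH hGreg hHreg α a u w hdG).symm
  have hrow : ∀ u, mass G (α + (1 - α) * dH / ((dG : ℝ) + dH)) x u
      = ∑ z ∈ Q.filter (fun z => z.1.1 = u), B z.1 z.2 := by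
    intro u
    exact hrowcol x (fun z => z.1)
      (fun p => by rw [row_eq hB p]; exact sum_filter_irrel _ _ _ _ _) u
  have hcol : ∀ u, mass G (α + (1 - α) * dH / ((dG : ℝ) + dH)) y u
      = ∑ z ∈ Q.filter (fun z => z.2.1 = u), B z.1 z.2 := by
    intro u
    exact hrowcol y (fun z => z.2)
      (fun p => by rw [col_eq hB p]; exact sum_filter_irrel _ _ _ _ _) u
  have hcoup : IsCoupling (mass G (α + (1 - α) * dH / ((dG : ℝ) + dH)) x)
      (mass G (α + (1 - α) * dH / ((dG : ℝ) + dH)) y)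
      (indexedA Q (fun z => z.1.1) (fun z => z.2.1) (fun z => B z.1 z.2)) := by
    refine isCoupling_indexed Q (fun z => z.1.1) (fun z => z.2.1)
      (fun z => B z.1 z.2) (fun z _ => hB.1 _ _) ?_ ?_
    · intro u
      rw [hrow u]
    · intro u
      rw [hcol u]
  refine le_trans (W_le hcoup) (le_trans ?_ hcB.le)
  rw [cost_indexed, cost_eq K hB]
  refine Finset.sum_le_sum fun z _ => ?_
  refine mul_le_mul_of_nonneg_left ?_ (hB.1 _ _)
  exact_mod_cast le_dist_boxProd G H hGconn hHconn z.1 z.2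

lemma ricci_boxProd_horiz (hGconn : G.Connected) (hHconn : H.Connected)
    (hGreg : ∀ v : V, deg G v = dG) (hHreg : ∀ w : W', deg H w = dH)
    {x y : V} (hxy : G.Adj x y) (w : W')
    (hq : Tendsto (fun α => kappaAlpha G α x y / (1 - α)) (𝓝[<] (1:ℝ)) (𝓝 0)) :
    ricci (G.boxProd H) (x, w) (y, w) = 0 := by
  classical
  set K := G.boxProd H with hK
  have hdG : 0 < dG := hGreg x ▸ deg_pos G hxy
  have hdGR : (0:ℝ) < dG := by exact_mod_cast hdG
  have hden : (0:ℝ) < (dG : ℝ) + dH := by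
    have : (0:ℝ) ≤ dH := Nat.cast_nonneg _
    linarith
  set r : ℝ := (dG : ℝ) / ((dG : ℝ) + dH) with hr
  have hr0 : 0 < r := div_pos hdGR hden
  set a2 : ℝ → ℝ := fun α => α + (1 - α) * dH / ((dG : ℝ) + dH) with ha2
  set ga : ℝ → ℝ := fun α => α / (α + (1 - α) * dG / ((dG : ℝ) + dH)) with hga
  set qG : ℝ → ℝ := fun α => kappaAlpha G α x y / (1 - α) with hqG
  set qK : ℝ → ℝ := fun α => kappaAlpha K α (x, w) (y, w) / (1 - α) with hqK
  -- basic algebraic facts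
  have h1a2 : ∀ α : ℝ, 1 - a2 α = (1 - α) * r := by
    intro α
    show 1 - (α + (1 - α) * dH / ((dG : ℝ) + dH)) = (1 - α) * ((dG : ℝ) / ((dG : ℝ) + dH))
    first
    | (field_simp; ring)
    | field_simp
  have hsfact : ∀ α : ℝ, α + (1 - α) * dG / ((dG : ℝ) + dH)
      = 1 - (1 - α) * dH / ((dG : ℝ) + dH) := by
    intro α
    first
    | (field_simp; ring)
    | field_simp
  -- upper bound
  have hub : ∀ α ∈ Set.Ioo (0:ℝ) 1, qK α ≤ qG (a2 α) * r := by
    intro α hαm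
    have h1α : (0:ℝ) < 1 - α := by linarith [hαm.2]
    have hWle := le_W_boxProd G H dG dH hGconn hHconn hGreg hHreg hxy w hαm
    have hκ : kappaAlpha K α (x, w) (y, w) ≤ kappaAlpha G (a2 α) x y := by
      rw [kappaAlpha, kappaAlpha, ha2]
      simp only
      linarith [hWle]
    have heq : kappaAlpha G (a2 α) x y / (1 - a2 α) * r
        = kappaAlpha G (a2 α) x y / (1 - α) := by
      rw [h1a2 α, div_mul_eq_mul_div, mul_comm (1 - α) r, ← div_div,
        mul_div_assoc, div_self hr0.ne', mul_one]
    show kappaAlpha K α (x, w) (y, w) / (1 - α)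
        ≤ kappaAlpha G (a2 α) x y / (1 - a2 α) * r
    rw [heq]
    exact div_le_div_of_nonneg_right hκ h1α.le
  -- lower bound
  have hlb : ∀ α ∈ Set.Ioo (0:ℝ) 1, qG (ga α) * r ≤ qK α := by
    intro α hαm
    have h1α : (0:ℝ) < 1 - α := by linarith [hαm.2]
    have hXpos : 0 < (1 - α) * dG / ((dG : ℝ) + dH) := by positivity
    have hs0 : (0:ℝ) < α + (1 - α) * dG / ((dG : ℝ) + dH) := by linarith [hαm.1]
    have hγ1 : ga α < 1 := by
      show α / (α + (1 - α) * dG / ((dG : ℝ) + dH)) < 1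
      rw [div_lt_one hs0]
      linarith
    have h1γ : (0:ℝ) < 1 - ga α := by linarith
    have hWle := W_boxProd_le G H dG dH hGconn hGreg hHreg hxy w hαm
    have hκ : (α + (1 - α) * dG / ((dG : ℝ) + dH)) * kappaAlpha G (ga α) x y
        ≤ kappaAlpha K α (x, w) (y, w) := by
      rw [kappaAlpha, kappaAlpha, mul_sub, mul_one]
      have hse : α + (1 - α) * dG / ((dG : ℝ) + dH)
          = 1 - (1 - α) * dH / ((dG : ℝ) + dH) := hsfact α
      linarith [hWle]
    have hsγ : (α + (1 - α) * dG / ((dG : ℝ) + dH)) * ga α = α := by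
      show (α + (1 - α) * dG / ((dG : ℝ) + dH))
          * (α / (α + (1 - α) * dG / ((dG : ℝ) + dH))) = α
      rw [mul_comm, div_mul_cancel₀ _ hs0.ne']
    have hkey : (α + (1 - α) * dG / ((dG : ℝ) + dH)) * (1 - ga α) = (1 - α) * r := by
      rw [mul_sub, mul_one, hsγ, hr]
      first
      | (field_simp; ring)
      | field_simp
    have heq : kappaAlpha G (ga α) x y / (1 - ga α) * r
        = (α + (1 - α) * dG / ((dG : ℝ) + dH)) * kappaAlpha G (ga α) x y / (1 - α) := by
      rw [div_mul_eq_mul_div, div_eq_div_iff h1γ.ne' h1α.ne']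
      have h3 : kappaAlpha G (ga α) x y * r * (1 - α)
          = kappaAlpha G (ga α) x y * ((1 - α) * r) := by ring
      rw [h3, ← hkey]
      ring
    show kappaAlpha G (ga α) x y / (1 - ga α) * r
        ≤ kappaAlpha K α (x, w) (y, w) / (1 - α)
    rw [heq]
    exact div_le_div_of_nonneg_right hκ h1α.le
  -- limit facts
  have hmem : Set.Ioo (0:ℝ) 1 ∈ 𝓝[<] (1:ℝ) :=
    Ioo_mem_nhdsLT_of_mem ⟨zero_lt_one, le_refl 1⟩
  have hta2 : Tendsto a2 (𝓝[<] (1:ℝ)) (𝓝[<] (1:ℝ)) := by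
    rw [tendsto_nhdsWithin_iff]
    constructor
    · have hcont : Continuous a2 := by
        rw [ha2]
        exact continuous_id.add (((continuous_const.sub continuous_id).mul
          continuous_const).div_const _)
      have h1 : a2 1 = 1 := by rw [ha2]; norm_num
      have := hcont.tendsto 1
      rw [h1] at this
      exact this.mono_left nhdsWithin_le_nhds
    · refine eventually_of_mem hmem fun α hαm => ?_
      have h1α : (0:ℝ) < 1 - α := by linarith [hαm.2]
      have hpos : 0 < (1 - α) * r := mul_pos h1α hr0
      have h2 := h1a2 α
      show a2 α ∈ Set.Iio (1:ℝ)
      have : a2 α < 1 := by linarith [h2, hpos]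
      exact this
  have htga : Tendsto ga (𝓝[<] (1:ℝ)) (𝓝[<] (1:ℝ)) := by
    rw [tendsto_nhdsWithin_iff]
    constructor
    · have hcont : ContinuousAt ga 1 := by
        apply ContinuousAt.div continuousAt_id
        · exact (continuousAt_id.add (((continuousAt_const.sub continuousAt_id).mul
            continuousAt_const).div_const _))
        · norm_num
      have h1 : ga 1 = 1 := by rw [hga]; norm_num
      have := hcont.tendsto
      rw [h1] at this
      exact this.mono_left nhdsWithin_le_nhds
    · refine eventually_of_mem hmem fun α hαm => ?_
      have h1α : (0:ℝ) < 1 - α := by linarith [hαm.2]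
      have hXpos : 0 < (1 - α) * dG / ((dG : ℝ) + dH) := by positivity
      have hs0 : (0:ℝ) < α + (1 - α) * dG / ((dG : ℝ) + dH) := by linarith [hαm.1]
      show ga α ∈ Set.Iio (1:ℝ)
      have : ga α < 1 := by
        show α / (α + (1 - α) * dG / ((dG : ℝ) + dH)) < 1
        rw [div_lt_one hs0]
        linarith
      exact this
  have hup : Tendsto (fun α => qG (a2 α) * r) (𝓝[<] (1:ℝ)) (𝓝 0) := by
    have := (hq.comp hta2).mul_const r
    simpa using this
  have hlo : Tendsto (fun α => qG (ga α) * r) (𝓝[<] (1:ℝ)) (𝓝 0) := by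
    have := (hq.comp htga).mul_const r
    simpa using this
  have hKt : Tendsto qK (𝓝[<] (1:ℝ)) (𝓝 0) :=
    tendsto_of_tendsto_of_tendsto_of_le_of_le' hlo hup
      (eventually_of_mem hmem hlb) (eventually_of_mem hmem hub)
  exact hKt.limUnder_eq

end ProductMain

/-- The Cartesian product of two regular connected
Ricci-flat graphs is Ricci-flat. -/
theorem ricciFlat_boxProd
    {V W' : Type*} (G : SimpleGraph V) (H : SimpleGraph W')
    [G.LocallyFinite] [H.LocallyFinite]
    (hGconn : G.Connected) (hHconn : H.Connected)
    (dG dH : ℕ) (hGreg : ∀ v : V, deg G v = dG) (hHreg : ∀ w : W', deg H w = dH)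
    (hGflat : RicciFlat G) (hHflat : RicciFlat H) :
    RicciFlat (G.boxProd H) := by
  rintro ⟨a, b⟩ ⟨a', b'⟩ hadj
  rw [SimpleGraph.boxProd_adj] at hadj
  rcases hadj with ⟨hG, (hb : b = b')⟩ | ⟨hH, (ha : a = a')⟩
  · subst hb
    exact ricci_boxProd_horiz G H dG dH hGconn hHconn hGreg hHreg hG b
      (tendsto_q G hGconn hG (hGflat a a' hG))
  · subst ha
    have h0 : ricci (H.boxProd G) (b, a) (b', a) = 0 :=
      ricci_boxProd_horiz H G dH dG hHconn hGconn hHreg hGreg hH a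
        (tendsto_q H hHconn hH (hHflat b b' hH))
    have heq := iso_ricci (SimpleGraph.boxProdComm H G) (b, a) (b', a)
    rw [h0] at heq
    exact heq

end RicciFlatPaper

end
end

section
/- Let G be a torsion-free abelian group (written additively) and S a finite subset of G with S = −S, 0 ∉ S, and S generating G. Let H = Cayley(G,S). Suppose that for every x ∈ G, every s ∈ S, and every integer n ≥ 1, the graph distance satisfies d_H(x, x + ns) = n. Then H is Ricci-flat. -/
open Filter Topology Classical

noncomputable section

namespace RicciFlatPaper

variable {V : Type*}

/-- The Cayley graph of an additive group `G` with connection set `S`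
(assumed to satisfy `S = -S` and `0 ∉ S`): `x` and `y` are adjacent iff
`y - x ∈ S`. -/
def cayley (G : Type*) [AddGroup G] (S : Set G) : SimpleGraph G :=
  SimpleGraph.fromRel (fun x y => y - x ∈ S)

section Aux
variable {G : Type*} [AddCommGroup G] {S : Set G}

lemma cayley_adj (hsymm : -S = S) (h0 : (0:G) ∉ S) {u v : G} :
    (cayley G S).Adj u v ↔ v - u ∈ S := by
  constructor
  · rintro ⟨hne, h | h⟩
    · exact h
    · rw [← hsymm]; simpa using h
  · intro h
    refine ⟨?_, Or.inl h⟩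
    rintro rfl; simp at h; exact h0 h

lemma neighborSet_cayley (hsymm : -S = S) (h0 : (0:G) ∉ S) (x : G) :
    (cayley G S).neighborSet x = (fun s => x + s) '' S := by
  ext v
  simp only [SimpleGraph.mem_neighborSet, cayley_adj hsymm h0, Set.mem_image]
  constructor
  · intro h; exact ⟨v - x, h, by abel⟩
  · rintro ⟨a, ha, rfl⟩; simpa using ha

lemma deg_cayley (hsymm : -S = S) (h0 : (0:G) ∉ S) (x : G) :
    deg (cayley G S) x = S.ncard := by
  rw [deg, neighborSet_cayley hsymm h0]
  exact Set.ncard_image_of_injective _ (add_right_injective x)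

/-- Finset support bound for the mass. -/
lemma support_mass_subset (hsymm : -S = S) (h0 : (0:G) ∉ S) (hfin : S.Finite)
    (α : ℝ) (x : G) :
    Function.support (mass (cayley G S) α x) ⊆
      ↑(insert x (hfin.toFinset.image (fun s => x + s))) := by
  intro v hv
  simp only [Function.mem_support, mass] at hv
  simp only [Finset.coe_insert, Set.mem_insert_iff, Finset.coe_image,
    Set.Finite.coe_toFinset, Set.mem_image]
  by_cases h1 : v = x
  · exact Or.inl h1
  · right
    rw [if_neg h1] at hv
    by_cases h2 : (cayley G S).Adj x v
    · exact ⟨v - x, (cayley_adj hsymm h0).1 h2, by abel⟩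
    · exact absurd (if_neg h2) hv

lemma mass_nonneg {α : ℝ} (hα0 : 0 ≤ α) (hα1 : α ≤ 1) (G' : SimpleGraph V) (x v : V) :
    0 ≤ mass G' α x v := by
  unfold mass
  split
  · exact hα0
  split
  · apply div_nonneg (by linarith) (by positivity)
  · exact le_refl _

lemma sum_mass (hsymm : -S = S) (h0 : (0:G) ∉ S) (hfin : S.Finite)
    (hne : S.Nonempty) (α : ℝ) (x : G) :
    ∑ u ∈ insert x (hfin.toFinset.image (fun s => x + s)), mass (cayley G S) α x u = 1 := by
  have hx : x ∉ hfin.toFinset.image (fun s => x + s) := by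
    simp only [Finset.mem_image, Set.Finite.mem_toFinset]
    rintro ⟨a, ha, hax⟩
    have : a = 0 := by simpa using hax
    exact h0 (this ▸ ha)
  rw [Finset.sum_insert hx]
  have h1 : mass (cayley G S) α x x = α := by simp [mass]
  have h2 : ∀ a ∈ hfin.toFinset, mass (cayley G S) α x (x + a) = (1 - α) / S.ncard := by
    intro a ha
    rw [Set.Finite.mem_toFinset] at ha
    have hax : x + a ≠ x := by
      intro h
      have : a = 0 := by simpa using h
      exact h0 (this ▸ ha)
    have hadj : (cayley G S).Adj x (x + a) := (cayley_adj hsymm h0).2 (by simpa using ha)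
    simp [mass, hax, hadj, deg_cayley hsymm h0]
  rw [Finset.sum_image (by intro a _ b _ h; exact add_left_cancel h)]
  rw [Finset.sum_congr rfl h2, Finset.sum_const]
  have hcard : hfin.toFinset.card = S.ncard := (Set.ncard_eq_toFinset_card S hfin).symm
  have hpos : (0:ℝ) < S.ncard := by
    have := Set.ncard_pos hfin |>.2 hne
    exact_mod_cast this
  rw [hcard, h1]
  rw [nsmul_eq_mul]
  field_simp
  ring


lemma mass_translate (hsymm : -S = S) (h0 : (0:G) ∉ S) {x y : G} (α : ℝ) (u : G) :
    mass (cayley G S) α y (u + (y - x)) = mass (cayley G S) α x u := by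
  have h1 : (u + (y - x) = y) ↔ (u = x) := by
    constructor
    · intro h
      have := eq_sub_of_add_eq h
      rwa [sub_sub_cancel] at this
    · intro h; rw [h]; abel
  have h2 : (cayley G S).Adj y (u + (y - x)) ↔ (cayley G S).Adj x u := by
    rw [cayley_adj hsymm h0, cayley_adj hsymm h0]
    have : u + (y - x) - y = u - x := by abel
    rw [this]
  unfold mass
  rw [deg_cayley hsymm h0 x, deg_cayley hsymm h0 y]
  simp only [h1, h2]

lemma exists_good_n (hconn : (cayley G S).Connected)
    (hdist : ∀ (x : G), ∀ s ∈ S, ∀ n : ℕ, 1 ≤ n →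
      (cayley G S).dist x (x + n • s) = n)
    {s : G} (hs : s ∈ S) (x : G) (T : Finset G) :
    ∃ n : ℕ, 1 ≤ n ∧ ∀ u ∈ T,
      (cayley G S).dist u (x + (n+1) • s) = (cayley G S).dist u (x + n • s) + 1 := by
  set H := cayley G S with hH
  have hstep : ∀ (u : G) (n : ℕ), H.dist u (x + (n+1) • s) ≤ H.dist u (x + n • s) + 1 := by
    intro u n
    have hone : H.dist (x + n • s) (x + (n+1) • s) = 1 := by
      have h := hdist (x + n • s) s hs 1 le_rfl
      have he : (x + n • s) + (1:ℕ) • s = x + (n+1) • s := by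
        rw [one_nsmul, succ_nsmul]; abel
      rwa [he] at h
    calc H.dist u (x + (n+1) • s)
        ≤ H.dist u (x + n • s) + H.dist (x + n • s) (x + (n+1) • s) :=
          hconn.dist_triangle
      _ = H.dist u (x + n • s) + 1 := by rw [hone]
  have hle : ∀ (u : G) (n : ℕ), n ≤ H.dist x u + H.dist u (x + n • s) := by
    intro u n
    rcases Nat.eq_zero_or_pos n with h | h
    · simp [h]
    · calc n = H.dist x (x + n • s) := (hdist x s hs n h).symm
        _ ≤ H.dist x u + H.dist u (x + n • s) := hconn.dist_triangle
  have key : ∀ u : G, ∃ n0 : ℕ, ∀ n, n0 ≤ n →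
      H.dist u (x + (n+1) • s) = H.dist u (x + n • s) + 1 := by
    intro u
    set c : ℕ → ℕ := fun n => H.dist x u + H.dist u (x + n • s) - n with hc
    have hanti : ∀ n, c (n+1) ≤ c n := by
      intro n
      have h1 := hstep u n
      have h2 := hle u (n+1)
      have h3 := hle u n
      simp only [hc]
      omega
    have hmono : Antitone c := antitone_nat_of_succ_le hanti
    obtain ⟨n0, hn0⟩ : ∃ n0, c n0 = sInf (Set.range c) := Nat.sInf_mem (Set.range_nonempty c)
    refine ⟨n0, fun n hn => ?_⟩
    have e1 : c n = c n0 := le_antisymm (hmono hn) (hn0 ▸ Nat.sInf_le ⟨n, rfl⟩)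
    have e2 : c (n+1) = c n0 :=
      le_antisymm (hmono (Nat.le_succ_of_le hn)) (hn0 ▸ Nat.sInf_le ⟨n+1, rfl⟩)
    have h1 := hstep u n
    have h2 := hle u (n+1)
    have h3 := hle u n
    simp only [hc] at e1 e2
    omega
  choose n0 hn0 using key
  refine ⟨T.sup n0 + 1, Nat.le_add_left 1 _, fun u hu => ?_⟩
  exact hn0 u _ (le_trans (Finset.le_sup hu) (Nat.le_succ _))

/-- translation graph hom -/
def transHom (S : Set G) (t : G) : cayley G S →g cayley G S where
  toFun := fun v => v + t
  map_rel' := by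
    rintro u v ⟨hne, h⟩
    exact ⟨by simpa using hne, by simpa using h⟩

lemma reachable_translate {t u v : G} (h : (cayley G S).Reachable u v) :
    (cayley G S).Reachable (u + t) (v + t) := by
  obtain ⟨p⟩ := h
  exact ⟨p.map (transHom S t)⟩

lemma dist_translate (t u v : G) (hr : (cayley G S).Reachable u v) :
    (cayley G S).dist (u + t) (v + t) = (cayley G S).dist u v := by
  have key : ∀ t u v : G, (cayley G S).Reachable u v →
      (cayley G S).dist (u + t) (v + t) ≤ (cayley G S).dist u v := by
    intro t u v hr
    obtain ⟨p, hp⟩ := hr.exists_walk_length_eq_dist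
    calc (cayley G S).dist (u + t) (v + t) ≤ (p.map (transHom S t)).length :=
          SimpleGraph.dist_le _
      _ = (cayley G S).dist u v := by rw [SimpleGraph.Walk.length_map, hp]
  refine le_antisymm (key t u v hr) ?_
  have := key (-t) (u + t) (v + t) (reachable_translate hr)
  simpa using this

lemma cayley_connected (hsymm : -S = S) (h0 : (0:G) ∉ S)
    (hgen : AddSubgroup.closure S = ⊤) : (cayley G S).Connected := by
  rw [SimpleGraph.connected_iff]
  refine ⟨?_, ⟨0⟩⟩
  have h00 : ∀ g : G, (cayley G S).Reachable 0 g := by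
    intro g
    have hg : g ∈ AddSubgroup.closure S := by rw [hgen]; trivial
    induction hg using AddSubgroup.closure_induction with
    | mem s hs =>
        exact SimpleGraph.Adj.reachable ((cayley_adj hsymm h0).2 (by simpa using hs))
    | zero => exact SimpleGraph.Reachable.refl 0
    | add a b _ _ ha hb =>
        have h1 : (cayley G S).Reachable a (b + a) := by
          simpa using reachable_translate (t := a) hb
        rw [add_comm] at h1
        exact ha.trans h1
    | neg a _ ha =>
        have := reachable_translate (t := -a) ha
        simpa using this.symm
  intro u v
  have := reachable_translate (t := u) (h00 (v - u))
  simpa using this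


lemma W_cayley_eq_one (hsymm : -S = S) (h0 : (0:G) ∉ S) (hfin : S.Finite)
    (hgen : AddSubgroup.closure S = ⊤)
    (hdist : ∀ (x : G), ∀ s ∈ S, ∀ n : ℕ, 1 ≤ n →
      (cayley G S).dist x (x + n • s) = n)
    {x y : G} (hxy : (cayley G S).Adj x y)
    {α : ℝ} (hα0 : 0 ≤ α) (hα1 : α ≤ 1) :
    W (cayley G S) (mass (cayley G S) α x) (mass (cayley G S) α y) = 1 := by
  classical
  set H := cayley G S with hH
  have hconn : H.Connected := cayley_connected hsymm h0 hgen
  set s : G := y - x with hsdef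
  have hs : s ∈ S := (cayley_adj hsymm h0).1 hxy
  have hney : S.Nonempty := ⟨s, hs⟩
  set Tx : Finset G := insert x (hfin.toFinset.image (fun a => x + a)) with hTxdef
  have hsuppx : Function.support (mass H α x) ⊆ ↑Tx :=
    support_mass_subset hsymm h0 hfin α x
  have hsummass : ∑ u ∈ Tx, mass H α x u = 1 := sum_mass hsymm h0 hfin hney α x
  have hxs : x + s = y := by rw [hsdef]; abel
  have hmt : ∀ u, mass H α y (u + s) = mass H α x u := fun u =>
    mass_translate hsymm h0 α u
  have hnn : ∀ v, 0 ≤ mass H α x v := fun v => mass_nonneg hα0 hα1 H x v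
  have hdist1 : ∀ u : G, H.dist u (u + s) = 1 := by
    intro u
    have h := hdist u s hs 1 le_rfl
    rwa [one_nsmul] at h
  set costSet : Set ℝ := {c | ∃ A : G → G → ℝ, IsCoupling (mass H α x) (mass H α y) A ∧
    c = ∑ᶠ p : G × G, A p.1 p.2 * (H.dist p.1 p.2 : ℝ)} with hcostSet
  -- the explicit coupling showing `1 ∈ costSet`
  set A₀ : G → G → ℝ := fun u v => if v = u + s then mass H α x u else 0 with hA₀def
  have hA₀supp : Function.support (fun p : G × G => A₀ p.1 p.2) ⊆
      ↑(Tx.image (fun u => (u, u + s))) := by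
    rintro ⟨u, v⟩ hp
    simp only [Function.mem_support, hA₀def] at hp
    have hv : v = u + s := by
      by_contra h; exact hp (if_neg h)
    rw [if_pos hv] at hp
    have hu : u ∈ Tx := hsuppx hp
    exact Finset.mem_coe.2 (Finset.mem_image.2 ⟨u, hu, by rw [hv]⟩)
  have hA₀inj : ∀ a ∈ Tx, ∀ b ∈ Tx, (a, a + s) = (b, b + s) → a = b := by
    intro a _ b _ h
    exact (Prod.mk.injEq _ _ _ _ ▸ h).1
  have hmemcost : (1 : ℝ) ∈ costSet := by
    refine ⟨A₀, ⟨?_, ?_, ?_, ?_⟩, ?_⟩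
    · intro u v
      simp only [hA₀def]
      split
      · exact hnn u
      · exact le_refl 0
    · exact Set.Finite.subset (Tx.image (fun u => (u, u + s))).finite_toSet hA₀supp
    · intro u
      have : ∀ v, v ≠ u + s → A₀ u v = 0 := by
        intro v hv; simp only [hA₀def]; exact if_neg hv
      rw [finsum_eq_single _ (u + s) this]
      simp [hA₀def]
    · intro v
      have : ∀ u, u ≠ v - s → A₀ u v = 0 := by
        intro u hu
        simp only [hA₀def]
        apply if_neg
        intro h
        exact hu (by rw [h]; abel)
      rw [finsum_eq_single _ (v - s) this]
      have h1 : A₀ (v - s) v = mass H α x (v - s) := by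
        simp only [hA₀def]
        rw [if_pos (by abel)]
      rw [h1, ← hmt (v - s)]
      congr 1
      abel
    · -- cost equals 1
      have hsub : Function.support
          (fun p : G × G => A₀ p.1 p.2 * (H.dist p.1 p.2 : ℝ)) ⊆
          ↑(Tx.image (fun u => (u, u + s))) := by
        intro p hp
        apply hA₀supp
        simp only [Function.mem_support] at hp ⊢
        intro h
        apply hp
        rw [h, zero_mul]
      rw [finsum_eq_sum_of_support_subset _ hsub,
        Finset.sum_image hA₀inj]
      have : ∀ u ∈ Tx, A₀ u (u + s) * (H.dist u (u + s) : ℝ) = mass H α x u := by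
        intro u _
        simp only [hA₀def, if_pos rfl, hdist1 u]
        norm_num
      rw [Finset.sum_congr rfl this, hsummass]
  -- lower bound
  have hlb : ∀ c ∈ costSet, (1 : ℝ) ≤ c := by
    rintro c ⟨A, ⟨hAnn, hAfs, hA1, hA2⟩, rfl⟩
    obtain ⟨n, hn1, hgood⟩ := exists_good_n hconn hdist hs x Tx
    set z : G := x + (n+1) • s with hzdef
    set f : G → ℝ := fun v => ((n+1 : ℕ) : ℝ) - (H.dist v z : ℝ) with hfdef
    have hLip : ∀ u v : G, f v - f u ≤ (H.dist u v : ℝ) := by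
      intro u v
      have ht : H.dist u z ≤ H.dist u v + H.dist v z := hconn.dist_triangle
      have ht' : (H.dist u z : ℝ) ≤ (H.dist u v : ℝ) + (H.dist v z : ℝ) := by
        exact_mod_cast ht
      simp only [hfdef]
      linarith
    have hfstep : ∀ u ∈ Tx, f (u + s) = f u + 1 := by
      intro u hu
      have hz' : z = (x + n • s) + s := by
        rw [hzdef, succ_nsmul]; abel
      have h1 : H.dist (u + s) z = H.dist u (x + n • s) := by
        rw [hz']
        exact dist_translate s u (x + n • s) (hconn.preconnected u _)
      have h2 : H.dist u z = H.dist u (x + n • s) + 1 := hgood u hu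
      simp only [hfdef, h1, h2]
      push_cast
      ring
    set P : Finset (G × G) := hAfs.toFinset with hPdef
    have hPmem : ∀ p : G × G, p ∉ P → A p.1 p.2 = 0 := by
      intro p hp
      by_contra h
      exact hp (hAfs.mem_toFinset.2 h)
    set Q1 : Finset G := P.image Prod.fst with hQ1def
    set Q2 : Finset G := P.image Prod.snd with hQ2def
    have hAy : ∀ v, ∑ u ∈ Q1, A u v = mass H α y v := by
      intro v
      rw [← hA2 v]
      symm
      apply finsum_eq_sum_of_support_subset
      intro u hu
      exact Finset.mem_coe.2 (Finset.mem_image.2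
        ⟨(u, v), hAfs.mem_toFinset.2 hu, rfl⟩)
    have hAx : ∀ u, ∑ v ∈ Q2, A u v = mass H α x u := by
      intro u
      rw [← hA1 u]
      symm
      apply finsum_eq_sum_of_support_subset
      intro v hv
      exact Finset.mem_coe.2 (Finset.mem_image.2
        ⟨(u, v), hAfs.mem_toFinset.2 hv, rfl⟩)
    have hc : ∑ᶠ p : G × G, A p.1 p.2 * (H.dist p.1 p.2 : ℝ)
        = ∑ p ∈ P, A p.1 p.2 * (H.dist p.1 p.2 : ℝ) := by
      apply finsum_eq_sum_of_support_subset
      intro p hp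
      simp only [Function.mem_support] at hp
      have : A p.1 p.2 ≠ 0 := fun h => hp (by rw [h, zero_mul])
      exact Finset.mem_coe.2 (hAfs.mem_toFinset.2 this)
    rw [hc]
    have step1 : ∑ p ∈ P, A p.1 p.2 * (f p.2 - f p.1)
        ≤ ∑ p ∈ P, A p.1 p.2 * (H.dist p.1 p.2 : ℝ) :=
      Finset.sum_le_sum fun p _ =>
        mul_le_mul_of_nonneg_left (hLip p.1 p.2) (hAnn p.1 p.2)
    have hPsub : P ⊆ Q1 ×ˢ Q2 := by
      intro p hp
      exact Finset.mem_product.2 ⟨Finset.mem_image.2 ⟨p, hp, rfl⟩,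
        Finset.mem_image.2 ⟨p, hp, rfl⟩⟩
    have hmain : ∑ p ∈ P, A p.1 p.2 * (f p.2 - f p.1) = 1 := by
      have hz : ∀ p ∈ Q1 ×ˢ Q2, p ∉ P → A p.1 p.2 * (f p.2 - f p.1) = 0 := by
        intro p _ hp
        rw [hPmem p hp, zero_mul]
      rw [Finset.sum_subset hPsub hz, Finset.sum_product]
      have hexp : ∀ u ∈ Q1, ∑ v ∈ Q2, A u v * (f v - f u)
          = (∑ v ∈ Q2, A u v * f v) - mass H α x u * f u := by
        intro u _
        rw [← hAx u, Finset.sum_mul]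
        rw [← Finset.sum_sub_distrib]
        congr 1
        ext v
        ring
      rw [Finset.sum_congr rfl hexp, Finset.sum_sub_distrib, Finset.sum_comm]
      have hyv : ∀ v ∈ Q2, ∑ u ∈ Q1, A u v * f v = mass H α y v * f v := by
        intro v _
        rw [← Finset.sum_mul, hAy v]
      rw [Finset.sum_congr rfl hyv]
      -- identify both sums with sums over Tx resp. its translate
      have hmassy_supp : Function.support (fun v => mass H α y v * f v) ⊆
          ↑(Tx.image (fun u => u + s)) := by
        intro v hv
        simp only [Function.mem_support] at hv
        have hmy : mass H α y v ≠ 0 := fun h => hv (by rw [h, zero_mul])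
        have : v ∈ Function.support (mass H α y) := hmy
        have hsub := support_mass_subset hsymm h0 hfin α y this
        simp only [Finset.coe_insert, Set.mem_insert_iff, Finset.coe_image,
          Set.Finite.coe_toFinset, Set.mem_image] at hsub
        simp only [Finset.coe_image, Set.mem_image, Finset.mem_coe, hTxdef]
        rcases hsub with h | ⟨a, ha, rfl⟩
        · exact ⟨x, Finset.mem_insert_self x _, by rw [hxs, h]⟩
        · refine ⟨x + a, Finset.mem_insert_of_mem ?_, by rw [← hxs]; abel⟩
          exact Finset.mem_image.2 ⟨a, hfin.mem_toFinset.2 ha, rfl⟩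
      have hmassy_suppQ : Function.support (fun v => mass H α y v * f v) ⊆ ↑Q2 := by
        intro v hv
        simp only [Function.mem_support] at hv
        have hmy : mass H α y v ≠ 0 := fun h => hv (by rw [h, zero_mul])
        rw [← hAy v] at hmy
        obtain ⟨u, -, hu⟩ := Finset.exists_ne_zero_of_sum_ne_zero hmy
        exact Finset.mem_coe.2 (Finset.mem_image.2
          ⟨(u, v), hAfs.mem_toFinset.2 hu, rfl⟩)
      have hmassx_suppQ : Function.support (fun u => mass H α x u * f u) ⊆ ↑Q1 := by
        intro u hu
        simp only [Function.mem_support] at hu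
        have hmx : mass H α x u ≠ 0 := fun h => hu (by rw [h, zero_mul])
        rw [← hAx u] at hmx
        obtain ⟨v, -, hv⟩ := Finset.exists_ne_zero_of_sum_ne_zero hmx
        exact Finset.mem_coe.2 (Finset.mem_image.2
          ⟨(u, v), hAfs.mem_toFinset.2 hv, rfl⟩)
      have hmassx_suppTx : Function.support (fun u => mass H α x u * f u) ⊆ ↑Tx := by
        intro u hu
        simp only [Function.mem_support] at hu
        have hmx : mass H α x u ≠ 0 := fun h => hu (by rw [h, zero_mul])
        exact hsuppx hmx
      have e1 : ∑ v ∈ Q2, mass H α y v * f v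
          = ∑ v ∈ Tx.image (fun u => u + s), mass H α y v * f v := by
        rw [← finsum_eq_sum_of_support_subset _ hmassy_suppQ,
          finsum_eq_sum_of_support_subset _ hmassy_supp]
      have e2 : ∑ u ∈ Q1, mass H α x u * f u = ∑ u ∈ Tx, mass H α x u * f u := by
        rw [← finsum_eq_sum_of_support_subset _ hmassx_suppQ,
          finsum_eq_sum_of_support_subset _ hmassx_suppTx]
      rw [e1, e2]
      rw [Finset.sum_image (by intro a _ b _ h; exact add_right_cancel h)]
      have e3 : ∀ u ∈ Tx, mass H α y (u + s) * f (u + s)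
          = mass H α x u * f u + mass H α x u := by
        intro u hu
        rw [hmt u, hfstep u hu]
        ring
      rw [Finset.sum_congr rfl e3, Finset.sum_add_distrib, hsummass]
      ring
    linarith
  -- conclude
  have hW : W H (mass H α x) (mass H α y) = sInf costSet := rfl
  rw [hW]
  exact le_antisymm (csInf_le ⟨1, hlb⟩ hmemcost) (le_csInf ⟨1, hmemcost⟩ hlb)


end Aux

/-- Let `G` be a torsion-free abelian group and `S` a finite
generating subset with `S = -S` and `0 ∉ S`.  If the Cayley graph
`H = Cayley(G,S)` satisfies `d_H(x, x + n•s) = n` for all `x ∈ G`, `s ∈ S`,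
and `n ≥ 1`, then `H` is Ricci-flat. -/
theorem ricciFlat_cayley_of_dist
    {G : Type*} [AddCommGroup G]
    (htorsionfree : ∀ g : G, g ≠ 0 → ∀ n : ℕ, 0 < n → n • g ≠ 0)
    (S : Set G) (hfin : S.Finite) (hsymm : -S = S) (h0 : (0 : G) ∉ S)
    (hgen : AddSubgroup.closure S = ⊤)
    (hdist : ∀ (x : G), ∀ s ∈ S, ∀ n : ℕ, 1 ≤ n →
      (cayley G S).dist x (x + n • s) = n) :
    RicciFlat (cayley G S) := by
  intro x y hxy
  have hev : (fun α => kappaAlpha (cayley G S) α x y / (1 - α))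
      =ᶠ[𝓝[<] (1 : ℝ)] (fun _ => (0 : ℝ)) := by
    filter_upwards [Ioo_mem_nhdsLT_of_mem
      (show (1:ℝ) ∈ Set.Ioc (0:ℝ) 1 by constructor <;> norm_num)] with α hα
    have hw := W_cayley_eq_one hsymm h0 hfin hgen hdist hxy
      (le_of_lt hα.1) (le_of_lt hα.2)
    simp [kappaAlpha, hw]
  have htendsto : Filter.Tendsto (fun α => kappaAlpha (cayley G S) α x y / (1 - α))
      (𝓝[<] (1 : ℝ)) (𝓝 0) := by
    rw [tendsto_congr' hev]
    exact tendsto_const_nhds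
  exact htendsto.limUnder_eq

end RicciFlatPaper

end
end

section
/- Let S be a finite set of nonzero vectors in a Euclidean space ℝ^m with S = −S, and suppose all vectors of S have the same Euclidean norm. Let G be the additive subgroup of ℝ^m generated by S. Then the Cayley graph Cayley(G,S) is Ricci-flat. (In particular, for every x ∈ G, s ∈ S, and integer n ≥ 1, the graph distance satisfies d(x, x + ns) = n.) -/
open Filter Topology Classical

noncomputable section

namespace RicciFlatPaper

variable {V : Type*}

lemma cayley_aux {V : Type*} [AddCommGroup V] (S' : Set V)
    (hfin : S'.Finite) (h0 : (0:V) ∉ S') (hsym : ∀ t ∈ S', -t ∈ S')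
    (hconn : AddSubgroup.closure S' = ⊤)
    (φ : V → V →+ ℝ) (hφ1 : ∀ s ∈ S', φ s s = 1)
    (hφle : ∀ s ∈ S', ∀ t ∈ S', φ s t ≤ 1) :
    (∀ s ∈ S', ∀ (x : V) (α : ℝ), 0 ≤ α → α ≤ 1 →
      kappaAlpha (cayley V S') α x (x + s) = 0) ∧
    (∀ s ∈ S', ∀ (x : V) (n : ℕ), (cayley V S').dist x (x + n • s) = n) := by
  classical
  set G := cayley V S' with hG
  have hadj : ∀ a b : V, G.Adj a b ↔ b - a ∈ S' := by
    intro a b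
    rw [hG]
    simp only [cayley, SimpleGraph.fromRel_adj]
    constructor
    · rintro ⟨hne, h | h⟩
      · exact h
      · simpa using hsym _ h
    · intro h
      exact ⟨fun hab => h0 (by simpa [hab] using h), Or.inl h⟩
  have htrans : ∀ (t a b : V), G.Reachable a b → G.Reachable (a + t) (b + t) := by
    intro t a b h
    rw [SimpleGraph.reachable_iff_reflTransGen] at h ⊢
    exact Relation.ReflTransGen.lift (fun v => v + t)
      (fun p q hpq => by show G.Adj (p + t) (q + t); rw [hadj] at hpq ⊢; simpa using hpq) _ _ h
  have hreach0 : ∀ v : V, G.Reachable 0 v := by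
    intro v
    have hv : v ∈ AddSubgroup.closure S' := hconn ▸ AddSubgroup.mem_top v
    refine AddSubgroup.closure_induction (p := fun g _ => G.Reachable 0 g) ?_ ?_ ?_ ?_ hv
    · intro z hz
      exact SimpleGraph.Adj.reachable (by rw [hadj]; simpa using hz)
    · exact SimpleGraph.Reachable.refl 0
    · intro a b _ _ ha hb
      have h2 := htrans b 0 a ha
      rw [zero_add] at h2
      exact hb.trans h2
    · intro a _ ha
      have h2 := htrans (-a) 0 a ha
      rw [zero_add, add_neg_cancel] at h2
      exact h2.symm
  have hreach : ∀ a b : V, G.Reachable a b := fun a b => (hreach0 a).symm.trans (hreach0 b)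
  have hwalk : ∀ s ∈ S', ∀ (u v : V) (w : G.Walk u v), φ s (v - u) ≤ (w.length : ℝ) := by
    intro s hs u v w
    induction w with
    | nil => simp
    | @cons a b c h p ih =>
      have h1 : φ s (b - a) ≤ 1 := hφle s hs _ ((hadj a b).1 h)
      have h2 : φ s (c - a) = φ s (b - a) + φ s (c - b) := by
        rw [← map_add]; congr 1; abel
      rw [SimpleGraph.Walk.length_cons, h2]
      push_cast
      linarith
  have hφdist : ∀ s ∈ S', ∀ u v : V, φ s (v - u) ≤ (G.dist u v : ℝ) := by
    intro s hs u v
    obtain ⟨w, hw⟩ := (hreach u v).exists_walk_length_eq_dist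
    calc φ s (v - u) ≤ (w.length : ℝ) := hwalk s hs u v w
      _ = _ := by rw [hw]
  have hadj_step : ∀ (u : V) (s : V), s ∈ S' → G.Adj u (u + s) := by
    intro u s hs; rw [hadj]; simpa using hs
  have hconn' : G.Connected := by
    rw [SimpleGraph.connected_iff]
    exact ⟨hreach, ⟨0⟩⟩
  have hdist1 : ∀ (u : V) (s : V), s ∈ S' → G.dist u (u + s) = 1 := by
    intro u s hs
    rw [SimpleGraph.dist_eq_one_iff_adj]
    exact hadj_step u s hs
  have hdist_n : ∀ s ∈ S', ∀ (x : V) (n : ℕ), G.dist x (x + n • s) = n := by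
    intro s hs x n
    refine le_antisymm ?_ ?_
    · induction n with
      | zero => simp
      | succ k ih =>
        have h1 : G.dist (x + k • s) (x + (k+1) • s) = 1 := by
          have heq : x + (k+1) • s = (x + k • s) + s := by rw [succ_nsmul]; abel
          rw [heq]
          exact hdist1 _ s hs
        calc G.dist x (x + (k+1) • s)
            ≤ G.dist x (x + k • s) + G.dist (x + k • s) (x + (k+1) • s) :=
              hconn'.dist_triangle
          _ ≤ k + 1 := by omega
    · have h1 := hφdist s hs x (x + n • s)
      have h2 : φ s ((x + n • s) - x) = (n : ℝ) := by
        have : (x + n • s) - x = n • s := by abel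
        rw [this, map_nsmul, hφ1 s hs, nsmul_eq_mul, mul_one]
      rw [h2] at h1
      exact_mod_cast h1

  -- neighbor sets and degree
  have hnb : ∀ z : V, G.neighborSet z = (fun t => z + t) '' S' := by
    intro z; ext v
    simp only [SimpleGraph.mem_neighborSet, Set.mem_image]
    rw [hadj]
    constructor
    · intro h; exact ⟨v - z, h, by abel⟩
    · rintro ⟨t, ht, rfl⟩; simpa using ht
  have hdeg : ∀ z : V, deg G z = S'.ncard := by
    intro z; unfold deg
    rw [hnb z, Set.ncard_image_of_injective _ (add_right_injective z)]
  set T : Finset V := hfin.toFinset with hTdef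
  have hTmem : ∀ t : V, t ∈ T ↔ t ∈ S' := fun t => hfin.mem_toFinset
  have hcard : S'.ncard = T.card := Set.ncard_eq_toFinset_card S' hfin
  set Nx : V → Finset V := fun z => insert z (T.image (fun t => z + t)) with hNx
  have hm_at : ∀ (β : ℝ) (z : V), mass G β z z = β := by intro β z; simp [mass]
  have hm_nb : ∀ (β : ℝ) (z t : V), t ∈ S' → mass G β z (z + t) = (1 - β) / (S'.ncard : ℝ) := by
    intro β z t ht
    have hne : z + t ≠ z := by
      intro h
      apply h0
      have ht0 : t = 0 := by
        have := h
        rwa [add_eq_left] at this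
      rwa [ht0] at ht
    unfold mass
    rw [if_neg hne, if_pos (hadj_step z t ht), hdeg]
  have hm_supp : ∀ (β : ℝ) (z : V), Function.support (mass G β z) ⊆ ↑(Nx z) := by
    intro β z v hv
    simp only [Function.mem_support] at hv
    by_cases h1 : v = z
    · simp [hNx, h1]
    · by_cases h2 : G.Adj z v
      · have h3 : v - z ∈ S' := (hadj z v).1 h2
        have h4 : v ∈ T.image (fun t => z + t) :=
          Finset.mem_image.2 ⟨v - z, (hTmem _).2 h3, by abel⟩
        exact Finset.mem_coe.2 (Finset.mem_insert.2 (Or.inr h4))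
      · exfalso; apply hv; unfold mass; rw [if_neg h1, if_neg h2]
  have hm_fin : ∀ (β : ℝ) (z : V), (Function.support (mass G β z)).Finite :=
    fun β z => (Nx z).finite_toSet.subset (hm_supp β z)
  refine ⟨?_, fun s hs z n => hdist_n s hs z n⟩
  intro s hs x α hα0 hα1
  have hTpos : 0 < T.card := Finset.card_pos.2 ⟨s, (hTmem s).2 hs⟩
  have hcard0 : ((S'.ncard : ℝ)) ≠ 0 := by
    rw [hcard]; exact_mod_cast hTpos.ne'
  have hmass_sum : ∀ (β : ℝ) (z : V), ∑ᶠ v, mass G β z v = 1 := by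
    intro β z
    rw [finsum_eq_sum_of_support_subset _ (hm_supp β z)]
    have hzx : z ∉ T.image (fun t => z + t) := by
      simp only [Finset.mem_image]
      rintro ⟨t, ht, hzt⟩
      apply h0
      have ht0 : t = 0 := by rwa [add_eq_left] at hzt
      rw [← ht0]
      exact (hTmem t).1 ht
    rw [show Nx z = insert z (T.image (fun t => z + t)) from rfl, Finset.sum_insert hzx, hm_at]
    have hcong : ∀ u ∈ T.image (fun t => z + t), mass G β z u = (1 - β) / (S'.ncard : ℝ) := by
      intro u hu
      obtain ⟨t, ht, rfl⟩ := Finset.mem_image.1 hu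
      exact hm_nb β z t ((hTmem t).1 ht)
    rw [Finset.sum_congr rfl hcong, Finset.sum_const,
      Finset.card_image_of_injective _ (add_right_injective z), nsmul_eq_mul, ← hcard]
    field_simp
    ring
  have hm_translate : ∀ (β : ℝ) (z v : V), mass G β (z + s) v = mass G β z (v - s) := by
    intro β z v
    have e1 : (v = z + s) ↔ (v - s = z) := Iff.symm sub_eq_iff_eq_add
    have e2 : G.Adj (z + s) v ↔ G.Adj z (v - s) := by
      rw [hadj, hadj]
      have harg : v - (z + s) = (v - s) - z := by abel
      rw [harg]
    have e3 : deg G (z + s) = deg G z := by rw [hdeg, hdeg]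
    unfold mass
    simp only [e1, e2, e3]

  -- the explicit coupling
  have hm₁fin : (Function.support (mass G α x)).Finite := hm_fin α x
  have hm₁0 : ∀ v, 0 ≤ mass G α x v := by
    intro v; unfold mass; split_ifs
    · exact hα0
    · exact div_nonneg (by linarith) (Nat.cast_nonneg _)
    · exact le_refl 0
  have hAcoup : IsCoupling (mass G α x) (mass G α (x + s))
      (fun u v => if v = u + s then mass G α x u else 0) := by
    refine ⟨?_, ?_, ?_, ?_⟩
    · intro u v; dsimp only; split_ifs
      · exact hm₁0 u
      · exact le_refl 0
    · refine Set.Finite.subset (hm₁fin.image (fun u => (u, u + s))) ?_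
      rintro ⟨u, v⟩ h
      simp only [Function.mem_support] at h
      by_cases hv : v = u + s
      · subst hv
        have hu : mass G α x u ≠ 0 := by simpa using h
        exact ⟨u, hu, rfl⟩
      · exfalso; apply h; simp [hv]
    · intro u
      rw [finsum_eq_single _ (u + s) (fun v hv => if_neg hv)]
      simp
    · intro v
      rw [finsum_eq_single _ (v - s) ?_]
      · have hc : v = v - s + s := by abel
        dsimp only
        rw [if_pos hc, hm_translate]
      · intro u hu
        have hne : v ≠ u + s := by
          intro h'; apply hu; rw [h']; abel
        exact if_neg hne
  have hcost : ∑ᶠ p : V × V,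
      (if p.2 = p.1 + s then mass G α x p.1 else 0) * (G.dist p.1 p.2 : ℝ) = 1 := by
    have hsub : Function.support
        (fun p : V × V => (if p.2 = p.1 + s then mass G α x p.1 else 0) * (G.dist p.1 p.2 : ℝ))
        ⊆ ↑((Nx x).image (fun u => (u, u + s))) := by
      rintro ⟨u, v⟩ h
      simp only [Function.mem_support] at h
      by_cases hv : v = u + s
      · subst hv
        have hu : mass G α x u ≠ 0 := by
          intro h'; apply h; simp [h']
        exact Finset.mem_coe.2 (Finset.mem_image.2 ⟨u, hm_supp α x hu, rfl⟩)
      · exfalso; apply h; simp [hv]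
    rw [finsum_eq_sum_of_support_subset _ hsub,
      Finset.sum_image (fun a _ b _ h => congrArg Prod.fst h)]
    have hterm : ∀ u ∈ Nx x,
        (if (u + s : V) = u + s then mass G α x u else 0) * (G.dist u (u + s) : ℝ)
          = mass G α x u := by
      intro u _
      rw [if_pos rfl, hdist1 u s hs, Nat.cast_one, mul_one]
    rw [Finset.sum_congr rfl hterm, ← finsum_eq_sum_of_support_subset _ (hm_supp α x),
      hmass_sum]
  have hmem1 : (1:ℝ) ∈ {c : ℝ | ∃ A : V → V → ℝ,
      IsCoupling (mass G α x) (mass G α (x + s)) A ∧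
      c = ∑ᶠ p : V × V, A p.1 p.2 * (G.dist p.1 p.2 : ℝ)} :=
    ⟨_, hAcoup, hcost.symm⟩
  have hbdd : ∀ c ∈ {c : ℝ | ∃ A : V → V → ℝ,
      IsCoupling (mass G α x) (mass G α (x + s)) A ∧
      c = ∑ᶠ p : V × V, A p.1 p.2 * (G.dist p.1 p.2 : ℝ)}, (0:ℝ) ≤ c := by
    rintro c ⟨A, ⟨hA0, hAfin, _, _⟩, rfl⟩
    exact finsum_nonneg fun p => mul_nonneg (hA0 _ _) (Nat.cast_nonneg _)
  rw [kappaAlpha, sub_eq_zero]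
  unfold W
  refine le_antisymm ?_ (csInf_le ⟨0, hbdd⟩ hmem1)
  refine le_csInf ⟨1, hmem1⟩ ?_
  rintro c ⟨A, ⟨hA0, hAfin, hA1, hA2⟩, rfl⟩
  set f : V → ℝ := fun u => - φ s u with hf
  have hfLip : ∀ u v : V, f u - f v ≤ (G.dist u v : ℝ) := by
    intro u v
    have h1 := hφdist s hs u v
    have heq : f u - f v = φ s (v - u) := by rw [hf]; dsimp only; rw [map_sub]; ring
    rw [heq]; exact h1
  set P : Finset (V × V) := hAfin.toFinset with hP
  have hPA : ∀ p : V × V, p ∉ P → A p.1 p.2 = 0 := by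
    intro p hp
    by_contra h'
    exact hp (hAfin.mem_toFinset.2 h')
  set U : Finset V := P.image Prod.fst ∪ P.image Prod.snd with hU
  have hPU : P ⊆ U ×ˢ U := by
    intro p hp
    exact Finset.mem_product.2 ⟨Finset.mem_union_left _ (Finset.mem_image_of_mem _ hp),
      Finset.mem_union_right _ (Finset.mem_image_of_mem _ hp)⟩
  have hrow : ∀ u, ∑ v ∈ U, A u v = mass G α x u := by
    intro u
    rw [← hA1 u]
    refine (finsum_eq_sum_of_support_subset _ ?_).symm
    intro v hv
    have hmem : (u, v) ∈ P := hAfin.mem_toFinset.2 hv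
    exact Finset.mem_coe.2 (Finset.mem_union_right _ (Finset.mem_image.2 ⟨(u,v), hmem, rfl⟩))
  have hcol : ∀ v, ∑ u ∈ U, A u v = mass G α (x + s) v := by
    intro v
    rw [← hA2 v]
    refine (finsum_eq_sum_of_support_subset _ ?_).symm
    intro u hu
    have hmem : (u, v) ∈ P := hAfin.mem_toFinset.2 hu
    exact Finset.mem_coe.2 (Finset.mem_union_left _ (Finset.mem_image.2 ⟨(u,v), hmem, rfl⟩))
  have hm₁U : ∀ u, u ∉ U → mass G α x u = 0 := by
    intro u hu
    rw [← hrow u]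
    refine Finset.sum_eq_zero fun v _ => ?_
    exact hPA (u, v) fun hmem =>
      hu (Finset.mem_union_left _ (Finset.mem_image.2 ⟨(u,v), hmem, rfl⟩))
  have hm₂U : ∀ v, v ∉ U → mass G α (x + s) v = 0 := by
    intro v hv
    rw [← hcol v]
    refine Finset.sum_eq_zero fun u _ => ?_
    exact hPA (u, v) fun hmem =>
      hv (Finset.mem_union_right _ (Finset.mem_image.2 ⟨(u,v), hmem, rfl⟩))
  have hstep1 : ∑ᶠ p : V × V, A p.1 p.2 * (G.dist p.1 p.2 : ℝ)
      = ∑ p ∈ P, A p.1 p.2 * (G.dist p.1 p.2 : ℝ) := by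
    refine finsum_eq_sum_of_support_subset _ ?_
    intro p hp
    simp only [Function.mem_support] at hp
    have hne : A p.1 p.2 ≠ 0 := fun h' => hp (by rw [h', zero_mul])
    exact Finset.mem_coe.2 (hAfin.mem_toFinset.2 hne)
  have hstep2 : ∑ p ∈ P, A p.1 p.2 * (f p.1 - f p.2)
      ≤ ∑ p ∈ P, A p.1 p.2 * (G.dist p.1 p.2 : ℝ) :=
    Finset.sum_le_sum fun p _ => mul_le_mul_of_nonneg_left (hfLip p.1 p.2) (hA0 p.1 p.2)
  have hstep3 : ∑ p ∈ P, A p.1 p.2 * (f p.1 - f p.2)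
      = ∑ p ∈ U ×ˢ U, A p.1 p.2 * (f p.1 - f p.2) := by
    refine Finset.sum_subset hPU fun p _ hp => ?_
    rw [hPA p hp, zero_mul]
  have hstep4 : ∑ p ∈ U ×ˢ U, A p.1 p.2 * (f p.1 - f p.2)
      = ∑ u ∈ U, f u * mass G α x u - ∑ v ∈ U, f v * mass G α (x + s) v := by
    rw [Finset.sum_product]
    have hinner : ∀ u ∈ U, ∑ v ∈ U, A u v * (f u - f v)
        = f u * (∑ v ∈ U, A u v) - ∑ v ∈ U, A u v * f v := by
      intro u _
      rw [Finset.mul_sum, ← Finset.sum_sub_distrib]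
      exact Finset.sum_congr rfl fun v _ => by ring
    rw [Finset.sum_congr rfl hinner, Finset.sum_sub_distrib]
    congr 1
    · exact Finset.sum_congr rfl fun u _ => by rw [hrow]
    · rw [Finset.sum_comm]
      refine Finset.sum_congr rfl fun v _ => ?_
      rw [← Finset.sum_mul, hcol, mul_comm]
  have hsupf1 : Function.support (fun u => f u * mass G α x u) ⊆ ↑U := by
    intro u hu
    simp only [Function.mem_support] at hu
    by_contra h'
    exact hu (by rw [hm₁U u h', mul_zero])
  have hsupf2 : Function.support (fun v => f v * mass G α (x + s) v) ⊆ ↑U := by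
    intro v hv
    simp only [Function.mem_support] at hv
    by_contra h'
    exact hv (by rw [hm₂U v h', mul_zero])
  have hstep5 : ∑ u ∈ U, f u * mass G α x u - ∑ v ∈ U, f v * mass G α (x + s) v
      = (∑ᶠ u, f u * mass G α x u) - (∑ᶠ v, f v * mass G α (x + s) v) := by
    rw [finsum_eq_sum_of_support_subset _ hsupf1, finsum_eq_sum_of_support_subset _ hsupf2]
  have hfg1 : (Function.support fun u => f u * mass G α x u).Finite := by
    refine hm₁fin.subset ?_
    intro u hu
    simp only [Function.mem_support] at hu ⊢
    intro h'
    exact hu (by rw [h', mul_zero])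
  have hfg2 : (Function.support fun u => f (u + s) * mass G α x u).Finite := by
    refine hm₁fin.subset ?_
    intro u hu
    simp only [Function.mem_support] at hu ⊢
    intro h'
    exact hu (by rw [h', mul_zero])
  have hshift : (∑ᶠ v, f v * mass G α x (v - s)) = ∑ᶠ u, f (u + s) * mass G α x u := by
    rw [← finsum_comp_equiv (Equiv.addRight s) (f := fun v => f v * mass G α x (v - s))]
    refine finsum_congr fun u => ?_
    simp only [Equiv.coe_addRight, add_sub_cancel_right]
  have hfinal : (∑ᶠ u, f u * mass G α x u) - (∑ᶠ v, f v * mass G α (x + s) v) = 1 := by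
    have ht : (∑ᶠ v, f v * mass G α (x + s) v) = ∑ᶠ v, f v * mass G α x (v - s) :=
      finsum_congr fun v => by rw [hm_translate]
    rw [ht, hshift, ← finsum_sub_distrib hfg1 hfg2]
    have hterm : ∀ u : V, f u * mass G α x u - f (u + s) * mass G α x u = mass G α x u := by
      intro u
      have hfd : f u - f (u + s) = φ s ((u + s) - u) := by
        rw [hf]; dsimp only; rw [map_sub]; ring
      have hss : (u + s) - u = s := by abel
      have h1 : f u - f (u + s) = 1 := by rw [hfd, hss, hφ1 s hs]
      calc f u * mass G α x u - f (u + s) * mass G α x u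
          = (f u - f (u + s)) * mass G α x u := by ring
        _ = mass G α x u := by rw [h1, one_mul]
    rw [finsum_congr hterm, hmass_sum]
  rw [hstep1]
  calc (1:ℝ) = ∑ p ∈ P, A p.1 p.2 * (f p.1 - f p.2) := by
        rw [hstep3, hstep4, hstep5, hfinal]
    _ ≤ _ := hstep2



/-- Let `S` be a finite symmetric set of nonzero vectors of
equal Euclidean norm in `ℝ^m` and let `Λ` be the additive subgroup it
generates.  Then `Cayley(Λ,S)` is Ricci-flat; in particular
`d(x, x + n•s) = n` for every `x ∈ Λ`, `s ∈ S`, and `n ≥ 1`. -/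
theorem ricciFlat_cayley_root_lattice_single_length
    {m : ℕ} (S : Set (EuclideanSpace ℝ (Fin m))) (hfin : S.Finite)
    (h0 : (0 : EuclideanSpace ℝ (Fin m)) ∉ S) (hsymm : -S = S)
    (hnorm : ∀ s ∈ S, ∀ t ∈ S, ‖s‖ = ‖t‖) :
    ∀ (S' : Set (AddSubgroup.closure S)),
      S' = {g : AddSubgroup.closure S | (g : EuclideanSpace ℝ (Fin m)) ∈ S} →
      RicciFlat (cayley (AddSubgroup.closure S) S') ∧
      ∀ (x : AddSubgroup.closure S), ∀ s ∈ S', ∀ n : ℕ, 1 ≤ n →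
        (cayley (AddSubgroup.closure S) S').dist x (x + n • s) = n := by
  intro S' hS'
  have hfin' : S'.Finite := by
    rw [hS']
    exact hfin.preimage (Set.injOn_of_injective Subtype.val_injective)
  have h0' : (0 : AddSubgroup.closure S) ∉ S' := by
    rw [hS']
    intro h
    exact h0 (by simpa using h)
  have hmemS : ∀ t : AddSubgroup.closure S, t ∈ S' → (t : EuclideanSpace ℝ (Fin m)) ∈ S := by
    intro t ht; rw [hS'] at ht; exact ht
  have hsym' : ∀ t ∈ S', -t ∈ S' := by
    intro t ht
    rw [hS'] at ht ⊢
    simp only [Set.mem_setOf_eq] at ht ⊢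
    have h2 : -(t : EuclideanSpace ℝ (Fin m)) ∈ -S := Set.neg_mem_neg.2 ht
    rw [hsymm] at h2
    simpa using h2
  have hconn' : AddSubgroup.closure S' = ⊤ := by
    rw [hS']
    exact AddSubgroup.closure_closure_coe_preimage
  set φ : (AddSubgroup.closure S) → ((AddSubgroup.closure S) →+ ℝ) := fun s =>
    AddMonoidHom.mk'
      (fun v => (inner ℝ ((v : EuclideanSpace ℝ (Fin m))) ((s : EuclideanSpace ℝ (Fin m))) : ℝ) / ‖(s : EuclideanSpace ℝ (Fin m))‖ ^ 2)
      (fun a b => by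
        push_cast
        rw [inner_add_left, add_div]) with hφ
  have hφval : ∀ s v : (AddSubgroup.closure S),
      φ s v = (inner ℝ ((v : EuclideanSpace ℝ (Fin m))) ((s : EuclideanSpace ℝ (Fin m))) : ℝ) / ‖(s : EuclideanSpace ℝ (Fin m))‖ ^ 2 := fun s v => rfl
  have hnz : ∀ s ∈ S', (s : EuclideanSpace ℝ (Fin m)) ≠ 0 := by
    intro s hs h
    apply h0
    rw [← h]
    exact hmemS s hs
  have hφ1 : ∀ s ∈ S', φ s s = 1 := by
    intro s hs
    rw [hφval, real_inner_self_eq_norm_sq]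
    exact div_self (pow_ne_zero 2 (norm_ne_zero_iff.2 (hnz s hs)))
  have hφle : ∀ s ∈ S', ∀ t ∈ S', φ s t ≤ 1 := by
    intro s hs t ht
    rw [hφval]
    have h1 : (inner ℝ ((t : EuclideanSpace ℝ (Fin m))) ((s : EuclideanSpace ℝ (Fin m))) : ℝ) ≤ ‖(t : EuclideanSpace ℝ (Fin m))‖ * ‖(s : EuclideanSpace ℝ (Fin m))‖ :=
      real_inner_le_norm _ _
    have h2 : ‖(t : EuclideanSpace ℝ (Fin m))‖ = ‖(s : EuclideanSpace ℝ (Fin m))‖ := hnorm _ (hmemS t ht) _ (hmemS s hs)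
    have h3 : (0:ℝ) < ‖(s : EuclideanSpace ℝ (Fin m))‖ ^ 2 :=
      pow_pos (norm_pos_iff.2 (hnz s hs)) 2
    rw [div_le_one h3]
    calc (inner ℝ ((t : EuclideanSpace ℝ (Fin m))) ((s : EuclideanSpace ℝ (Fin m))) : ℝ) ≤ ‖(t : EuclideanSpace ℝ (Fin m))‖ * ‖(s : EuclideanSpace ℝ (Fin m))‖ := h1
      _ = ‖(s : EuclideanSpace ℝ (Fin m))‖ ^ 2 := by rw [h2]; ring
  obtain ⟨hkappa, hdist⟩ := cayley_aux S' hfin' h0' hsym' hconn' φ hφ1 hφle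
  constructor
  · intro x y hxy
    have hs : y - x ∈ S' := by
      unfold cayley at hxy
      rw [SimpleGraph.fromRel_adj] at hxy
      rcases hxy with ⟨hne, h | h⟩
      · exact h
      · simpa using hsym' _ h
    have hy : x + (y - x) = y := by abel
    unfold ricci
    have hev : (fun β => kappaAlpha (cayley (AddSubgroup.closure S) S') β x y / (1 - β))
        =ᶠ[𝓝[<] (1:ℝ)] (fun _ => (0:ℝ)) := by
      filter_upwards [Ioo_mem_nhdsLT_of_mem
        (⟨zero_lt_one, le_refl 1⟩ : (1:ℝ) ∈ Set.Ioc 0 1)] with β hβ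
      have h1 := hkappa (y - x) hs x β hβ.1.le hβ.2.le
      rw [hy] at h1
      rw [h1, zero_div]
    exact Filter.Tendsto.limUnder_eq ((tendsto_congr' hev).2 tendsto_const_nhds)
  · intro x s hs n _
    exact hdist s hs x n


end RicciFlatPaper

end
end
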